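/- arXiv:2601.02547 — 6 statements merged into one kernel-verified Lean document; each statement's English description precedes it below -/
import Mathlib

section
/- Let n ≥ 1 and let d : Fin n → Fin n → ℝ be an ultrametric with d i j ≤ 2 for all i, j. Then the n × n real symmetric matrix A with entries A i j = (1 - 1/n) - d i j / 2 is positive semidefinite. (Equivalently, for any ultrametric tree with n leaves whose common distance from the root is 1, (1 - 1/n)·J ≥ D/2 in the positive-semidefinite order, where J is the all-ones matrix and D the leaf distance matrix.) -/
/-!
For every `R` bounding the distances on a finite ultrametric set `s`, we show
`R (∑ x)² / |s| ≤ ∑ᵢⱼ xᵢ xⱼ (R - dᵢⱼ)` by strong induction on `s`; the theorem is the case `R = 2`.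
If `m` is the diameter of `s`, then `s` splits into two nonempty parts at mutual distance exactly
`m` (a ball of radius `< m` around an end of a diametral pair, and its complement). Writing
`R - d = (R - m) + (m - d)`, the first summand contributes `(R - m) (∑ x)²`, and `m - d` is
block diagonal, so induction on the two blocks with `R = m` and Sedrakyan's inequality
`(a + b)² / (p + q) ≤ a² / p + b² / q` finish the step.
-/

open Finset

theorem add_sq_div_add_le {K : Type*} [Semifield K] [LinearOrder K] [IsStrictOrderedRing K]
    [ExistsAddOfLE K] {a b p q : K} (hp : 0 < p) (hq : 0 < q) :
    (a + b) ^ 2 / (p + q) ≤ a ^ 2 / p + b ^ 2 / q := by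
  simpa [Fin.sum_univ_two] using
    sq_sum_div_le_sum_sq_div univ ![a, b] (g := ![p, q]) (by simp [Fin.forall_fin_two, hp, hq])

theorem Finset.sum_sum_eq_add_of_cross_eq_zero {ι M : Type*} [DecidableEq ι] [AddCommMonoid M]
    {s t : Finset ι} (hts : t ⊆ s) (f : ι → ι → M)
    (htu : ∀ i ∈ t, ∀ j ∈ s \ t, f i j = 0) (hut : ∀ i ∈ s \ t, ∀ j ∈ t, f i j = 0) :
    ∑ i ∈ s, ∑ j ∈ s, f i j = ∑ i ∈ t, ∑ j ∈ t, f i j + ∑ i ∈ s \ t, ∑ j ∈ s \ t, f i j := by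
  have row (i : ι) : ∑ j ∈ s, f i j = ∑ j ∈ s \ t, f i j + ∑ j ∈ t, f i j := (sum_sdiff hts).symm
  rw [← sum_sdiff hts]
  simp only [row, sum_add_distrib]
  rw [sum_eq_zero fun i hi => sum_eq_zero (hut i hi), sum_eq_zero fun i hi => sum_eq_zero (htu i hi),
    add_zero, zero_add, add_comm]

structure IsUltrametricOn {ι : Type*} (s : Finset ι) (d : ι → ι → ℝ) : Prop where
  self_eq_zero : ∀ i ∈ s, d i i = 0
  symm : ∀ i ∈ s, ∀ j ∈ s, d i j = d j i
  le_max : ∀ i ∈ s, ∀ j ∈ s, ∀ k ∈ s, d i j ≤ max (d i k) (d k j)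

namespace IsUltrametricOn

variable {ι : Type*} {s t : Finset ι} {d : ι → ι → ℝ}

theorem mono (hd : IsUltrametricOn s d) (hts : t ⊆ s) : IsUltrametricOn t d where
  self_eq_zero i hi := hd.self_eq_zero i (hts hi)
  symm i hi j hj := hd.symm i (hts hi) j (hts hj)
  le_max i hi j hj k hk := hd.le_max i (hts hi) j (hts hj) k (hts hk)

theorem nonneg (hd : IsUltrametricOn s d) {i j : ι} (hi : i ∈ s) (hj : j ∈ s) : 0 ≤ d i j := by
  simpa [hd.self_eq_zero i hi, hd.symm j hj i hi] using hd.le_max i hi i hi j hj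

theorem isosceles (hd : IsUltrametricOn s d) {i j k : ι} (hi : i ∈ s) (hj : j ∈ s) (hk : k ∈ s)
    (h : d k i < d k j) : d i j = d k j := by
  refine le_antisymm ?_ ((le_max_iff.1 (hd.le_max k hk j hj i hi)).resolve_left h.not_ge)
  calc d i j ≤ max (d i k) (d k j) := hd.le_max i hi j hj k hk
    _ = d k j := max_eq_right (hd.symm i hi k hk ▸ h.le)

theorem exists_split [DecidableEq ι] (hd : IsUltrametricOn s d) (hs : s.Nontrivial) :
    ∃ t ⊆ s, t.Nonempty ∧ (s \ t).Nonempty ∧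
      ∃ m, (∀ i ∈ s, ∀ j ∈ s, d i j ≤ m) ∧ ∀ i ∈ t, ∀ j ∈ s \ t, d i j = m := by
  obtain ⟨a, ha, b, hb, hab⟩ := hs
  obtain ⟨⟨a, b⟩, hp, hmax⟩ :=
    s.offDiag.exists_max_image (fun p => d p.1 p.2) ⟨(a, b), mem_offDiag.2 ⟨ha, hb, hab⟩⟩
  obtain ⟨ha, hb, hab⟩ := mem_offDiag.1 hp
  have hle : ∀ i ∈ s, ∀ j ∈ s, d i j ≤ d a b := fun i hi j hj => by
    rcases eq_or_ne i j with rfl | hij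
    · exact hd.self_eq_zero i hi ▸ hd.nonneg ha hb
    · exact hmax (i, j) (mem_offDiag.2 ⟨hi, hj, hij⟩)
  -- `a` is put in explicitly for the case `d a b = 0`, where the open ball is empty
  refine ⟨s.filter (fun j => j = a ∨ d a j < d a b), filter_subset _ _, ⟨a, by simp [ha]⟩,
    ⟨b, by simp [hb, hab.symm]⟩, d a b, hle, fun i hi j hj => ?_⟩
  simp only [mem_sdiff, mem_filter, not_and, not_or, not_lt] at hi hj
  have hj' : d a j = d a b := le_antisymm (hle a ha j hj.1) (hj.2 hj.1).2
  rcases hi.2 with rfl | hlt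
  · exact hj'
  · rw [hd.isosceles hi.1 hj.1 ha (hlt.trans_eq hj'.symm), hj']

theorem sum_sum_mul_sub_eq_of_cross_eq [DecidableEq ι] (hd : IsUltrametricOn s d) (hts : t ⊆ s)
    {m : ℝ} (hcross : ∀ i ∈ t, ∀ j ∈ s \ t, d i j = m) (R : ℝ) (x : ι → ℝ) :
    ∑ i ∈ s, ∑ j ∈ s, x i * x j * (R - d i j) = (R - m) * (∑ i ∈ s, x i) ^ 2 +
      (∑ i ∈ t, ∑ j ∈ t, x i * x j * (m - d i j) +
        ∑ i ∈ s \ t, ∑ j ∈ s \ t, x i * x j * (m - d i j)) := by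
  rw [← sum_sum_eq_add_of_cross_eq_zero hts, sq, sum_mul_sum, mul_sum, ← sum_add_distrib]
  · refine sum_congr rfl fun i _ => ?_
    rw [mul_sum, ← sum_add_distrib]
    exact sum_congr rfl fun j _ => by ring
  · intro i hi j hj
    rw [hcross i hi j hj, sub_self, mul_zero]
  · intro i hi j hj
    rw [hd.symm i (sdiff_subset hi) j (hts hj), hcross j hj i hi, sub_self, mul_zero]

theorem mul_sq_sum_div_card_le (hd : IsUltrametricOn s d) {R : ℝ}
    (hR : ∀ i ∈ s, ∀ j ∈ s, d i j ≤ R) (x : ι → ℝ) :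
    R * (∑ i ∈ s, x i) ^ 2 / #s ≤ ∑ i ∈ s, ∑ j ∈ s, x i * x j * (R - d i j) := by
  classical
  induction s using Finset.strongInduction generalizing R with | H s ih =>
  rcases s.eq_empty_or_nonempty with rfl | hne
  · simp
  obtain ⟨a, rfl⟩ | hs := hne.exists_eq_singleton_or_nontrivial
  · simp [hd.self_eq_zero a (mem_singleton_self a), sq, mul_comm]
  obtain ⟨t, hts, ht, hu, m, hm, hcross⟩ := hd.exists_split hs
  obtain ⟨i, hi⟩ := ht
  obtain ⟨j, hj⟩ := hu
  have hmR : m ≤ R := hcross i hi j hj ▸ hR i (hts hi) j (sdiff_subset hj)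
  have hm0 : 0 ≤ m := hcross i hi j hj ▸ hd.nonneg (hts hi) (sdiff_subset hj)
  have iht := ih t (hts.ssubset_of_not_subset (sdiff_nonempty.1 ⟨j, hj⟩)) (hd.mono hts)
    fun i hi j hj => hm i (hts hi) j (hts hj)
  have ihu := ih (s \ t) (sdiff_ssubset hts ⟨i, hi⟩) (hd.mono sdiff_subset)
    fun i hi j hj => hm i (sdiff_subset hi) j (sdiff_subset hj)
  have hcard : (#s : ℝ) = #t + #(s \ t) := by
    rw [add_comm]; exact_mod_cast (card_sdiff_add_card_eq_card hts).symm
  have hsum : ∑ i ∈ s, x i = ∑ i ∈ t, x i + ∑ i ∈ s \ t, x i := by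
    rw [add_comm]; exact (sum_sdiff hts).symm
  have hcard_pos : (1 : ℝ) ≤ #s := by exact_mod_cast hs.nonempty.card_pos
  rw [hd.sum_sum_mul_sub_eq_of_cross_eq hts hcross]
  calc R * (∑ i ∈ s, x i) ^ 2 / #s
      = (R - m) * ((∑ i ∈ s, x i) ^ 2 / #s) +
          m * ((∑ i ∈ t, x i + ∑ i ∈ s \ t, x i) ^ 2 / (#t + #(s \ t))) := by
        rw [← hsum, ← hcard]; ring
    _ ≤ (R - m) * (∑ i ∈ s, x i) ^ 2 +
          m * ((∑ i ∈ t, x i) ^ 2 / #t + (∑ i ∈ s \ t, x i) ^ 2 / #(s \ t)) := by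
        gcongr
        · exact div_le_self (sq_nonneg _) hcard_pos
        · exact add_sq_div_add_le (by exact_mod_cast card_pos.2 ⟨i, hi⟩)
            (by exact_mod_cast card_pos.2 ⟨j, hj⟩)
    _ ≤ _ := by
        rw [mul_add, ← mul_div_assoc, ← mul_div_assoc]
        gcongr

end IsUltrametricOn

theorem ultrametric_psd_general (n : ℕ) (d : Fin n → Fin n → ℝ)
    (h_diag : ∀ i, d i i = 0)
    (h_symm : ∀ i j, d i j = d j i)
    (h_ultra : ∀ i j k, d i j ≤ max (d i k) (d k j))
    (h_bound : ∀ i j, d i j ≤ 2) :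
    (Matrix.of fun i j : Fin n => (1 - 1 / (n : ℝ)) - d i j / 2).PosSemidef := by
  have hd : IsUltrametricOn univ d :=
    ⟨fun i _ => h_diag i, fun i _ j _ => h_symm i j, fun i _ j _ k _ => h_ultra i j k⟩
  refine Matrix.posSemidef_iff_dotProduct_mulVec.2 ⟨?_, fun x => ?_⟩
  · ext i j
    simp [h_symm i j]
  have key := hd.mul_sq_sum_div_card_le (R := 2) (fun i _ j _ => h_bound i j) x
  rw [card_univ, Fintype.card_fin] at key
  have hquad : star x ⬝ᵥ (Matrix.of (fun i j => (1 - 1 / (n : ℝ)) - d i j / 2)).mulVec x =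
      (∑ i, ∑ j, x i * x j * (2 - d i j) - 2 * (∑ i, x i) ^ 2 / n) / 2 := by
    rw [sq, sum_mul_sum]
    simp only [dotProduct, Matrix.mulVec, Matrix.of_apply, Pi.star_apply, star_trivial, mul_sum,
      sum_div, ← sum_sub_distrib]
    exact sum_congr rfl fun i _ => sum_congr rfl fun j _ => by ring
  rw [hquad]
  linarith

/-- **Theorem (ultrametric tree PSD bound).** For an ultrametric `d` on `n` points with
all distances at most `2` (equivalently, the leaf distance matrix of an ultrametric tree
of radius 1 with `n` leaves), the matrix `(1 - 1/n) • J - D/2` is positive semidefinite. -/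
theorem ultrametric_psd (n : ℕ) (hn : 1 ≤ n) (d : Fin n → Fin n → ℝ)
    (h_diag : ∀ i, d i i = 0)
    (h_symm : ∀ i j, d i j = d j i)
    (h_nonneg : ∀ i j, 0 ≤ d i j)
    (h_ultra : ∀ i j k, d i j ≤ max (d i k) (d k j))
    (h_bound : ∀ i j, d i j ≤ 2) :
    (Matrix.of fun i j : Fin n => (1 - 1 / (n : ℝ)) - d i j / 2).PosSemidef :=
  ultrametric_psd_general n d h_diag h_symm h_ultra h_bound
end

section
/- Let n ≥ 1 and let d : Fin n → Fin n → ℝ be given by d i j = 2 for i ≠ j and d i i = 0 (the star ultrametric, which is the leaf distance function of the ultrametric tree of radius 1 in which the root is the parent of all n leaves). If c is a real number such that the n × n matrix with entries c - d i j / 2 is positive semidefinite, then c ≥ 1 - 1/n. Hence 1 - 1/n is the smallest constant c for which (c·J - D/2) is positive semidefinite for every ultrametric d on n points with d i j ≤ 2, where J is the all-ones matrix and D = (d i j). -/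
/-!
Testing the star matrix against the all-ones vector gives `n (n c - n + 1) ≥ 0`, hence the lower
bound. For the matching upper bound put `A = 2 - d`; it suffices that
`β (∑ x)² ≤ #S · xᵀ A x` whenever `A` is an ultrametric matrix on `S` with diagonal `β`.
By strong induction on `S`: the least entry `μ ≥ 0` splits `S` into two blocks with all cross
entries equal to `μ`; subtracting `μ` decouples the blocks, and the induction hypotheses for them
combine through the weighted Cauchy–Schwarz inequality `(u + v)² / (a + b) ≤ u² / a + v² / b`.
-/

open Finset Matrix

section QuadForm

variable {ι : Type*}

def quadFormOn (S : Finset ι) (A : ι → ι → ℝ) (x : ι → ℝ) : ℝ :=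
  ∑ i ∈ S, ∑ j ∈ S, x i * A i j * x j

theorem quadFormOn_congr {S : Finset ι} {A A' : ι → ι → ℝ}
    (h : ∀ i ∈ S, ∀ j ∈ S, A i j = A' i j) (x : ι → ℝ) :
    quadFormOn S A x = quadFormOn S A' x :=
  sum_congr rfl fun i hi => sum_congr rfl fun j hj => by rw [h i hi j hj]

theorem quadFormOn_const (S : Finset ι) (c : ℝ) (x : ι → ℝ) :
    quadFormOn S (fun _ _ => c) x = c * (∑ i ∈ S, x i) ^ 2 := by
  rw [quadFormOn, sq, sum_mul_sum, mul_sum]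
  exact sum_congr rfl fun i _ => by rw [mul_sum]; exact sum_congr rfl fun j _ => by ring

theorem quadFormOn_sub_const (S : Finset ι) (A : ι → ι → ℝ) (c : ℝ) (x : ι → ℝ) :
    quadFormOn S (fun i j => A i j - c) x = quadFormOn S A x - c * (∑ i ∈ S, x i) ^ 2 := by
  rw [← quadFormOn_const, quadFormOn, quadFormOn, quadFormOn, ← sum_sub_distrib]
  simp only [← sum_sub_distrib, mul_sub, sub_mul]

theorem quadFormOn_mul_const (S : Finset ι) (A : ι → ι → ℝ) (c : ℝ) (x : ι → ℝ) :
    quadFormOn S (fun i j => A i j * c) x = quadFormOn S A x * c := by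
  simp only [quadFormOn, sum_mul]
  exact sum_congr rfl fun i _ => sum_congr rfl fun j _ => by ring

theorem quadFormOn_union [DecidableEq ι] {B C : Finset ι} (hBC : Disjoint B C)
    {A : ι → ι → ℝ} (hBC₀ : ∀ i ∈ B, ∀ j ∈ C, A i j = 0) (hCB₀ : ∀ i ∈ C, ∀ j ∈ B, A i j = 0)
    (x : ι → ℝ) :
    quadFormOn (B ∪ C) A x = quadFormOn B A x + quadFormOn C A x := by
  have hcross : ∀ {T U : Finset ι}, (∀ i ∈ T, ∀ j ∈ U, A i j = 0) →
      ∑ i ∈ T, ∑ j ∈ U, x i * A i j * x j = 0 := fun h =>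
    sum_eq_zero fun i hi => sum_eq_zero fun j hj => by rw [h i hi j hj]; ring
  simp only [quadFormOn, sum_union hBC, sum_add_distrib, hcross hBC₀, hcross hCB₀]
  ring

theorem Matrix.star_dotProduct_mulVec_eq_quadFormOn [Fintype ι] (M : Matrix ι ι ℝ)
    (x : ι → ℝ) : star x ⬝ᵥ (M *ᵥ x) = quadFormOn univ (fun i j => M i j) x := by
  simp only [dotProduct, mulVec, star_trivial, quadFormOn, mul_sum, mul_assoc]

end QuadForm

theorem mul_add_sq_le_of_mul_sq_le {a b γ u v p q : ℝ} (ha : 0 < a) (hb : 0 < b)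
    (hγ : 0 ≤ γ) (hu : γ * u ^ 2 ≤ a * p) (hv : γ * v ^ 2 ≤ b * q) :
    γ * (u + v) ^ 2 ≤ (a + b) * (p + q) := by
  refine le_of_mul_le_mul_left ?_ (mul_pos ha hb)
  calc a * b * (γ * (u + v) ^ 2)
      = (a + b) * (b * (γ * u ^ 2) + a * (γ * v ^ 2)) - γ * (b * u - a * v) ^ 2 := by ring
    _ ≤ (a + b) * (b * (a * p) + a * (b * q)) := by
      have := mul_nonneg hγ (sq_nonneg (b * u - a * v))
      have := add_le_add (mul_le_mul_of_nonneg_left hu hb.le)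
        (mul_le_mul_of_nonneg_left hv ha.le)
      nlinarith
    _ = a * b * ((a + b) * (p + q)) := by ring

/-- `A = β - d` for an ultrametric `d ≤ β`: the ultrametric inequality becomes a `min`
inequality. -/
structure IsUltrametricMatrixOn {ι : Type*} (S : Finset ι) (A : ι → ι → ℝ) (β : ℝ) : Prop where
  symm : ∀ i ∈ S, ∀ j ∈ S, A i j = A j i
  min_le : ∀ i ∈ S, ∀ j ∈ S, ∀ k ∈ S, min (A i k) (A k j) ≤ A i j
  diag : ∀ i ∈ S, A i i = β
  nonneg : ∀ i ∈ S, ∀ j ∈ S, 0 ≤ A i j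

namespace IsUltrametricMatrixOn

variable {ι : Type*} {S : Finset ι} {A : ι → ι → ℝ} {β : ℝ}

theorem le_diag (h : IsUltrametricMatrixOn S A β) {i j : ι} (hi : i ∈ S) (hj : j ∈ S) :
    A i j ≤ β := by
  simpa [h.symm j hj i hi, h.diag i hi] using h.min_le i hi i hi j hj

theorem mono (h : IsUltrametricMatrixOn S A β) {T : Finset ι} (hT : T ⊆ S) :
    IsUltrametricMatrixOn T A β where
  symm i hi j hj := h.symm i (hT hi) j (hT hj)
  min_le i hi j hj k hk := h.min_le i (hT hi) j (hT hj) k (hT hk)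
  diag i hi := h.diag i (hT hi)
  nonneg i hi j hj := h.nonneg i (hT hi) j (hT hj)

theorem sub_const (h : IsUltrametricMatrixOn S A β) {μ : ℝ}
    (hμ : ∀ i ∈ S, ∀ j ∈ S, μ ≤ A i j) :
    IsUltrametricMatrixOn S (fun i j => A i j - μ) (β - μ) where
  symm i hi j hj := by rw [h.symm i hi j hj]
  min_le i hi j hj k hk := by
    rw [min_sub_sub_right]; exact sub_le_sub_right (h.min_le i hi j hj k hk) μ
  diag i hi := by rw [h.diag i hi]
  nonneg i hi j hj := sub_nonneg.mpr (hμ i hi j hj)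

theorem apply_eq_of_lt_of_not_lt (h : IsUltrametricMatrixOn S A β) {μ : ℝ}
    (hμ : ∀ i ∈ S, ∀ j ∈ S, μ ≤ A i j) {p i j : ι} (hp : p ∈ S) (hi : i ∈ S) (hj : j ∈ S)
    (hpi : μ < A p i) (hpj : ¬ μ < A p j) : A i j = μ := by
  refine (hμ i hi j hj).antisymm' (not_lt.mp fun hij => hpj ?_)
  exact (lt_min hpi hij).trans_le (h.min_le p hp j hj i hi)

theorem quadFormOn_sub_eq_add_filter [DecidableEq ι] (h : IsUltrametricMatrixOn S A β) {μ : ℝ}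
    (hμ : ∀ i ∈ S, ∀ j ∈ S, μ ≤ A i j) {p : ι} (hp : p ∈ S) (x : ι → ℝ) :
    quadFormOn S (fun i j => A i j - μ) x =
      quadFormOn (S.filter (μ < A p ·)) (fun i j => A i j - μ) x +
        quadFormOn (S.filter (¬ μ < A p ·)) (fun i j => A i j - μ) x := by
  conv_lhs => rw [← filter_union_filter_not_eq (μ < A p ·) S]
  refine quadFormOn_union (disjoint_filter_filter_not S S _)
    (fun i hi j hj => ?_) (fun i hi j hj => ?_) x
  · exact sub_eq_zero.mpr <| h.apply_eq_of_lt_of_not_lt hμ hp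
      (mem_filter.mp hi).1 (mem_filter.mp hj).1 (mem_filter.mp hi).2 (mem_filter.mp hj).2
  · rw [h.symm i (mem_filter.mp hi).1 j (mem_filter.mp hj).1]
    exact sub_eq_zero.mpr <| h.apply_eq_of_lt_of_not_lt hμ hp
      (mem_filter.mp hj).1 (mem_filter.mp hi).1 (mem_filter.mp hj).2 (mem_filter.mp hi).2

theorem mul_sq_sum_le_card_mul_quadFormOn (h : IsUltrametricMatrixOn S A β) (x : ι → ℝ) :
    β * (∑ i ∈ S, x i) ^ 2 ≤ #S * quadFormOn S A x := by
  classical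
  induction S using Finset.strongInduction generalizing A β with
  | _ S ih =>
  obtain rfl | hS := S.eq_empty_or_nonempty
  · simp [quadFormOn]
  obtain ⟨⟨p, q⟩, hpq, hmin⟩ := exists_min_image (S ×ˢ S) (fun pq => A pq.1 pq.2) (hS.product hS)
  obtain ⟨hp, hq⟩ := mem_product.mp hpq
  set μ := A p q
  have hμ : ∀ i ∈ S, ∀ j ∈ S, μ ≤ A i j := fun i hi j hj => hmin (i, j) (mem_product.mpr ⟨hi, hj⟩)
  have hμ₀ : 0 ≤ μ := h.nonneg p hp q hq
  have hcard : (1 : ℝ) ≤ #S := by exact_mod_cast hS.card_pos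
  rcases (h.le_diag hp hq).eq_or_lt with hμβ | hμβ
  · have hconst : quadFormOn S A x = β * (∑ i ∈ S, x i) ^ 2 := by
      rw [← quadFormOn_const]
      exact quadFormOn_congr (fun i hi j hj => (h.le_diag hi hj).antisymm (hμβ ▸ hμ i hi j hj)) x
    rw [hconst]
    exact le_mul_of_one_le_left (mul_nonneg (hμβ ▸ hμ₀) (sq_nonneg _)) hcard
  set B := S.filter (μ < A p ·)
  set C := S.filter (¬ μ < A p ·)
  have hpB : p ∈ B := mem_filter.mpr ⟨hp, by rwa [h.diag p hp]⟩
  have hqC : q ∈ C := mem_filter.mpr ⟨hq, lt_irrefl μ⟩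
  have hBS : B ⊂ S := ssubset_of_subset_of_ne (filter_subset _ _) fun hBS =>
    (mem_filter.mp hqC).2 (mem_filter.mp (hBS ▸ hq : q ∈ B)).2
  have hCS : C ⊂ S := ssubset_of_subset_of_ne (filter_subset _ _) fun hCS =>
    (mem_filter.mp (hCS ▸ hp : p ∈ C)).2 (mem_filter.mp hpB).2
  have hshift := h.sub_const hμ
  have ihB := ih B hBS (hshift.mono hBS.subset)
  have ihC := ih C hCS (hshift.mono hCS.subset)
  have hsplit := h.quadFormOn_sub_eq_add_filter hμ hp x
  have hsum : ∑ i ∈ S, x i = ∑ i ∈ B, x i + ∑ i ∈ C, x i :=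
    (sum_filter_add_sum_filter_not S _ x).symm
  have hcardS : (#S : ℝ) = #B + #C := by exact_mod_cast (card_filter_add_card_filter_not _).symm
  have key := mul_add_sq_le_of_mul_sq_le (by exact_mod_cast card_pos.mpr ⟨p, hpB⟩)
    (by exact_mod_cast card_pos.mpr ⟨q, hqC⟩) (sub_nonneg.mpr hμβ.le) ihB ihC
  rw [← hsum, ← hcardS, ← hsplit, quadFormOn_sub_const] at key
  have := le_mul_of_one_le_left (mul_nonneg hμ₀ (sq_nonneg (∑ i ∈ S, x i))) hcard
  linarith

end IsUltrametricMatrixOn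

theorem one_sub_inv_card_le_of_posSemidef_star {ι : Type*} [Fintype ι] [DecidableEq ι]
    [Nonempty ι] {c : ℝ}
    (hc : (Matrix.of fun i j : ι => c - (if i = j then (0 : ℝ) else 2) / 2).PosSemidef) :
    1 - 1 / (Fintype.card ι : ℝ) ≤ c := by
  have h := hc.dotProduct_mulVec_nonneg (fun _ => 1)
  rw [star_dotProduct_mulVec_eq_quadFormOn,
    quadFormOn_congr (A' := fun i j => (if i = j then 1 else 0) - (1 - c))
      (fun i _ j _ => by rw [of_apply]; split_ifs <;> ring),
    quadFormOn_sub_const] at h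
  simp only [quadFormOn, mul_ite, mul_one, mul_zero, sum_ite_eq, mem_univ, ↓reduceIte,
    sum_const, card_univ, nsmul_eq_mul, sub_nonneg] at h
  have hn : (0 : ℝ) < Fintype.card ι := by exact_mod_cast Fintype.card_pos
  rw [sub_le_comm, le_div_iff₀ hn]
  exact le_of_mul_le_mul_right (by linarith) hn

theorem posSemidef_of_ultrametric_le_two {ι : Type*} [Fintype ι] (d : ι → ι → ℝ)
    (hd₀ : ∀ i, d i i = 0) (hsymm : ∀ i j, d i j = d j i)
    (hultra : ∀ i j k, d i j ≤ max (d i k) (d k j)) (hle : ∀ i j, d i j ≤ 2) :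
    (Matrix.of fun i j => (1 - 1 / (Fintype.card ι : ℝ)) - d i j / 2).PosSemidef := by
  rw [posSemidef_iff_dotProduct_mulVec]
  refine ⟨?_, fun x => ?_⟩
  · ext i j
    simp [hsymm j i]
  have hA : IsUltrametricMatrixOn univ (fun i j => 2 - d i j) 2 :=
    { symm := fun i _ j _ => by rw [hsymm]
      min_le := fun i _ j _ k _ => by
        rw [min_sub_sub_left]; exact sub_le_sub_left (hultra i j k) 2
      diag := fun i _ => by rw [hd₀, sub_zero]
      nonneg := fun i _ j _ => sub_nonneg.mpr (hle i j) }
  have key := hA.mul_sq_sum_le_card_mul_quadFormOn x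
  have hform : star x ⬝ᵥ ((Matrix.of fun i j => (1 - 1 / (Fintype.card ι : ℝ)) - d i j / 2) *ᵥ x)
      = quadFormOn univ (fun i j => 2 - d i j) x * 2⁻¹
        - 1 / Fintype.card ι * (∑ i, x i) ^ 2 := by
    rw [← quadFormOn_mul_const, ← quadFormOn_sub_const, star_dotProduct_mulVec_eq_quadFormOn]
    exact quadFormOn_congr (fun i _ j _ => by rw [of_apply]; ring) x
  rw [hform]
  rcases isEmpty_or_nonempty ι
  · simp [quadFormOn]
  have hn : (0 : ℝ) < Fintype.card ι := by exact_mod_cast Fintype.card_pos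
  rw [card_univ] at key
  rw [sub_nonneg, one_div, inv_mul_le_iff₀ hn]
  linarith

/-- **Theorem (optimality of the constant `1 - 1/n`).**
For the star ultrametric `d i j = 2` (`i ≠ j`), `d i i = 0`, if the matrix with entries
`c - d i j / 2` is positive semidefinite then `c ≥ 1 - 1/n`.  Hence `1 - 1/n` is the
smallest constant `c` such that `c • J - D/2` is positive semidefinite for every
ultrametric `d` on `n` points with `d i j ≤ 2`. -/
theorem star_metric_optimal_constant (n : ℕ) (hn : 1 ≤ n) :
    (∀ c : ℝ,
      (Matrix.of fun i j : Fin n =>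
        c - (if i = j then (0 : ℝ) else 2) / 2).PosSemidef →
      1 - 1 / (n : ℝ) ≤ c) ∧
    IsLeast {c : ℝ | ∀ d : Fin n → Fin n → ℝ,
        (∀ i, d i i = 0) → (∀ i j, d i j = d j i) → (∀ i j, 0 ≤ d i j) →
        (∀ i j k, d i j ≤ max (d i k) (d k j)) → (∀ i j, d i j ≤ 2) →
        (Matrix.of fun i j => c - d i j / 2).PosSemidef}
      (1 - 1 / (n : ℝ)) := by
  have : Nonempty (Fin n) := ⟨⟨0, hn⟩⟩
  have star_bound : ∀ c : ℝ, (Matrix.of fun i j : Fin n =>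
      c - (if i = j then (0 : ℝ) else 2) / 2).PosSemidef → 1 - 1 / (n : ℝ) ≤ c := fun c hc => by
    simpa using one_sub_inv_card_le_of_posSemidef_star hc
  refine ⟨star_bound, fun d hd₀ hsymm _ hultra hle => ?_, fun c hc => star_bound c ?_⟩
  · simpa using posSemidef_of_ultrametric_le_two d hd₀ hsymm hultra hle
  · refine hc _ (fun i => if_pos rfl) (fun i j => by simp only [eq_comm])
      (fun i j => by split_ifs <;> norm_num)
      (fun i j k => by split_ifs <;> simp_all)
      (fun i j => by split_ifs <;> norm_num)
end

section
/- Let m ≥ 1, let h : Fin m → Fin m → ℝ be symmetric with 0 ≤ h i j ≤ 1 for all i ≠ j and such that for all pairwise distinct i, j, k the maximum among h i j, h j k, h i k is attained at least twice; let H : Fin m → ℝ satisfy 0 ≤ H i ≤ 1 and H i ≤ h i j for all j ≠ i; and let n₁, …, n_m be positive integers with n = n₁ + ⋯ + n_m. Then the m × m symmetric matrix A with entries A i j = (1 - 1/n) - h i j for i ≠ j and A i i = (1 - 1/n) - (1 - 1/n_i)·H i is positive semidefinite. -/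
/-!
Replace each minimal vertex `i` by the `n i` leaves below it. The heights of lowest common
ancestors then form an ultrametric `d ≤ 1` on the `n` leaves (two leaves below the same `i` meet
at height `H i`), and the quadratic form of the matrix at `w` is `∑ a x a y (1 - d x y) - (∑ a)² / n`
for the leaf weights `a x = w i / n i`. Now `1 - d x y = ∫_{(0,1]} 1[d x y < s] ds`, and for each
`s > 0` the relation `d x y < s` is an equivalence; by Cauchy–Schwarz over its at most `n` classes,
`∑_{d x y < s} a x a y ≥ (∑ a)² / n`. Integrating over `s` gives the claim.
-/

open Finset MeasureTheory

theorem sq_sum_le_card_mul_sum_sum_ite_eq {S T : Type*} [Fintype S] [DecidableEq T]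
    (f : S → T) (a : S → ℝ) :
    (∑ x, a x) ^ 2 ≤ Fintype.card S * ∑ x, ∑ y, if f x = f y then a x * a y else 0 := by
  set b : T → ℝ := fun c => ∑ x with f x = c, a x
  have hmaps : ∀ x ∈ (univ : Finset S), f x ∈ univ.image f := fun x _ =>
    mem_image_of_mem f (mem_univ x)
  have hsum : ∑ x, a x = ∑ c ∈ univ.image f, b c := (sum_fiberwise_of_maps_to hmaps a).symm
  have hpairs :
      ∑ x, ∑ y, (if f x = f y then a x * a y else 0) = ∑ c ∈ univ.image f, b c ^ 2 :=
    calc ∑ x, ∑ y, (if f x = f y then a x * a y else 0) = ∑ x, a x * b (f x) := by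
          simp only [b, mul_sum, sum_filter, mul_ite, mul_zero, eq_comm]
      _ = ∑ c ∈ univ.image f, b c ^ 2 := by
          rw [← sum_fiberwise_of_maps_to hmaps]
          refine sum_congr rfl fun c _ => ?_
          rw [sq, sum_mul]
          exact sum_congr rfl fun x hx => by rw [(mem_filter.mp hx).2]
  rw [hsum, hpairs]
  calc (∑ c ∈ univ.image f, b c) ^ 2 ≤ (#(univ.image f) : ℝ) * ∑ c ∈ univ.image f, b c ^ 2 :=
        sq_sum_le_card_mul_sum_sq
    _ ≤ Fintype.card S * ∑ c ∈ univ.image f, b c ^ 2 := by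
        gcongr
        exact card_image_le

section

open Set

theorem setIntegral_Ioc_indicator_Ioi {u t : ℝ} (hu : 0 ≤ u) (hut : u ≤ t) :
    ∫ s in Ioc 0 t, (Ioi u).indicator 1 s = t - u := by
  rw [setIntegral_indicator measurableSet_Ioi, Ioc_inter_Ioi, max_eq_right hu]
  simp [hut]

theorem mul_sq_sum_div_card_le_of_ultrametric {S : Type*} [Fintype S]
    (d : S → S → ℝ) (d_self : ∀ x, d x x = 0) (d_comm : ∀ x y, d x y = d y x)
    (d_ultra : ∀ x y z, d x z ≤ max (d x y) (d y z)) {t : ℝ} (d_le : ∀ x y, d x y ≤ t)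
    (a : S → ℝ) :
    t * (∑ x, a x) ^ 2 / Fintype.card S ≤ ∑ x, ∑ y, a x * a y * (t - d x y) := by
  classical
  rcases isEmpty_or_nonempty S with hS | hS
  · simp
  have d_nonneg : ∀ x y, 0 ≤ d x y := fun x y => by
    simpa [d_self, d_comm y x] using d_ultra x y x
  have ht : 0 ≤ t := d_self hS.some ▸ d_le _ _
  let ball (s : ℝ) (hs : 0 < s) : Setoid S :=
    ⟨fun x y => d x y < s, ⟨fun x => d_self x ▸ hs, fun h => d_comm _ _ ▸ h,
      fun hxy hyz => (d_ultra _ _ _).trans_lt (max_lt hxy hyz)⟩⟩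
  have slice (s : ℝ) (hs : s ∈ Ioc 0 t) : (∑ x, a x) ^ 2 / Fintype.card S ≤
      ∑ x, ∑ y, a x * a y * (Ioi (d x y)).indicator 1 s := by
    rw [div_le_iff₀ (by positivity), mul_comm]
    refine (sq_sum_le_card_mul_sum_sum_ite_eq (Quotient.mk (ball s hs.1)) a).trans_eq ?_
    refine congrArg _ (sum_congr rfl fun x _ => sum_congr rfl fun y _ => ?_)
    simp only [Quotient.eq, indicator_apply, Set.mem_Ioi, Pi.one_apply, mul_ite, mul_one, mul_zero]
    exact if_congr Iff.rfl rfl rfl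
  have integrable (x y : S) :
      IntegrableOn (fun s => a x * a y * (Ioi (d x y)).indicator 1 s) (Ioc 0 t) :=
    Integrable.const_mul ((integrableOn_const (C := (1 : ℝ)) measure_Ioc_lt_top.ne).indicator
      measurableSet_Ioi) _
  calc t * (∑ x, a x) ^ 2 / Fintype.card S
      = ∫ _ in Ioc 0 t, (∑ x, a x) ^ 2 / Fintype.card S := by simp [ht, mul_div_assoc]
    _ ≤ ∫ s in Ioc 0 t, ∑ x, ∑ y, a x * a y * (Ioi (d x y)).indicator 1 s :=
        setIntegral_mono_on (integrableOn_const measure_Ioc_lt_top.ne)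
          (integrable_finsetSum _ fun x _ => integrable_finsetSum _ fun y _ => integrable x y)
          measurableSet_Ioc slice
    _ = ∑ x, ∑ y, a x * a y * (t - d x y) := by
        rw [integral_finsetSum _ fun x _ => integrable_finsetSum _ fun y _ => integrable x y]
        refine sum_congr rfl fun x _ => ?_
        rw [integral_finsetSum _ fun y _ => integrable x y]
        refine sum_congr rfl fun y _ => ?_
        rw [integral_const_mul, setIntegral_Ioc_indicator_Ioi (d_nonneg x y) (d_le x y)]

end

theorem le_max_of_max_attained_twice {α : Type*} [LinearOrder α] {a b c : α}
    (h : (a = max a (max b c) ∧ b = max a (max b c)) ∨ (a = max a (max b c) ∧ c = max a (max b c)) ∨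
      (b = max a (max b c) ∧ c = max a (max b c))) : c ≤ max a b := by
  rcases h with ⟨ha, -⟩ | ⟨ha, hc⟩ | ⟨hb, hc⟩
  · exact le_max_of_le_left (ha ▸ le_max_of_le_right (le_max_right b c))
  · exact (hc.trans ha.symm).le.trans (le_max_left a b)
  · exact (hc.trans hb.symm).le.trans (le_max_right a b)

theorem sum_sigma_fin_div_mul {ι : Type*} [Fintype ι] {n : ι → ℕ} (hn : ∀ i, 0 < n i)
    (w f : ι → ℝ) : ∑ x : Σ i, Fin (n i), w x.1 / n x.1 * f x.1 = ∑ i, w i * f i := by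
  rw [Fintype.sum_sigma]
  refine sum_congr rfl fun i _ => ?_
  have : (n i : ℝ) ≠ 0 := by exact_mod_cast (hn i).ne'
  simp only [sum_const, card_univ, Fintype.card_fin, nsmul_eq_mul]
  field_simp

section Blowup

variable {ι : Type*} [DecidableEq ι] {β : ι → Type*} [∀ i, DecidableEq (β i)]

def blowupDist (D : ι → ι → ℝ) (H : ι → ℝ) (x y : Σ i, β i) : ℝ :=
  if x = y then 0 else if x.1 = y.1 then H x.1 else D x.1 y.1

variable {D : ι → ι → ℝ} {H : ι → ℝ}

@[simp] theorem blowupDist_self (x : Σ i, β i) : blowupDist D H x x = 0 := if_pos rfl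

theorem blowupDist_of_fst_ne {x y : Σ i, β i} (h : x.1 ≠ y.1) :
    blowupDist D H x y = D x.1 y.1 := by
  rw [blowupDist, if_neg (fun e => h (congrArg Sigma.fst e)), if_neg h]

theorem blowupDist_of_fst_eq {x y : Σ i, β i} (h : x.1 = y.1) (hxy : x ≠ y) :
    blowupDist D H x y = H x.1 := by
  rw [blowupDist, if_neg hxy, if_pos h]

theorem blowupDist_comm (hD : ∀ i j, D i j = D j i) (x y : Σ i, β i) :
    blowupDist D H x y = blowupDist D H y x := by
  by_cases hxy : x = y
  · rw [hxy]
  by_cases h : x.1 = y.1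
  · rw [blowupDist_of_fst_eq h hxy, blowupDist_of_fst_eq h.symm (Ne.symm hxy), h]
  · rw [blowupDist_of_fst_ne h, blowupDist_of_fst_ne (Ne.symm h), hD]

theorem blowupDist_le_of_fst_eq (hH : ∀ i, 0 ≤ H i) {x y : Σ i, β i} (h : x.1 = y.1) :
    blowupDist D H x y ≤ H x.1 := by
  by_cases hxy : x = y
  · rw [hxy, blowupDist_self]; exact hH _
  · rw [blowupDist_of_fst_eq h hxy]

theorem le_blowupDist (hHD : ∀ i j, i ≠ j → H i ≤ D i j) {x y : Σ i, β i} (hxy : x ≠ y) :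
    H x.1 ≤ blowupDist D H x y := by
  by_cases h : x.1 = y.1
  · rw [blowupDist_of_fst_eq h hxy]
  · rw [blowupDist_of_fst_ne h]; exact hHD _ _ h

theorem blowupDist_le {t : ℝ} (hH : ∀ i, 0 ≤ H i) (hHt : ∀ i, H i ≤ t)
    (hDt : ∀ i j, i ≠ j → D i j ≤ t) (x y : Σ i, β i) : blowupDist D H x y ≤ t := by
  by_cases h : x.1 = y.1
  · exact (blowupDist_le_of_fst_eq hH h).trans (hHt _)
  · rw [blowupDist_of_fst_ne h]; exact hDt _ _ h

theorem blowupDist_le_max (hH : ∀ i, 0 ≤ H i) (hHD : ∀ i j, i ≠ j → H i ≤ D i j)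
    (hDult : ∀ i j k, i ≠ j → j ≠ k → i ≠ k → D i k ≤ max (D i j) (D j k))
    (x y z : Σ i, β i) :
    blowupDist D H x z ≤ max (blowupDist D H x y) (blowupDist D H y z) := by
  by_cases hxz : x.1 = z.1
  · by_cases hxy : x = y
    · subst hxy; exact le_max_right _ _
    · exact (blowupDist_le_of_fst_eq hH hxz).trans
        ((le_blowupDist hHD hxy).trans (le_max_left _ _))
  by_cases hxy : x.1 = y.1
  · rw [blowupDist_of_fst_ne hxz, blowupDist_of_fst_ne (hxy ▸ hxz : y.1 ≠ z.1), hxy]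
    exact le_max_right _ _
  by_cases hyz : y.1 = z.1
  · rw [blowupDist_of_fst_ne hxz, blowupDist_of_fst_ne hxy, hyz]
    exact le_max_left _ _
  rw [blowupDist_of_fst_ne hxz, blowupDist_of_fst_ne hxy, blowupDist_of_fst_ne hyz]
  exact hDult _ _ _ hxy hyz hxz

theorem sum_sum_mul_sub_blowupDist [Fintype ι] {n : ι → ℕ} (hn : ∀ i, 0 < n i)
    (D : ι → ι → ℝ) (H : ι → ℝ) (w : ι → ℝ) (t : ℝ) :
    ∑ x : Σ i, Fin (n i), ∑ y : Σ i, Fin (n i),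
        w x.1 / n x.1 * (w y.1 / n y.1) * (t - blowupDist D H x y) =
      ∑ i, ∑ j, w i * w j * (if i = j then t - (1 - 1 / n i) * H i else t - D i j) := by
  set g : ι → ι → ℝ := fun i j => if i = j then t - H i else t - D i j
  -- Diagonal pairs `x = y` sit at distance `0` instead of `H x.1`.
  have split (x y : Σ i, Fin (n i)) :
      t - blowupDist D H x y = g x.1 y.1 + if x = y then H x.1 else 0 := by
    by_cases hxy : x = y
    · subst hxy; simp [g, blowupDist]
    · simp only [g, blowupDist, hxy, if_false, add_zero]
      split_ifs <;> rfl
  have off_diag : ∑ x : Σ i, Fin (n i), ∑ y : Σ i, Fin (n i),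
      w x.1 / n x.1 * (w y.1 / n y.1) * g x.1 y.1 = ∑ i, ∑ j, w i * w j * g i j := by
    simp only [mul_assoc, ← mul_sum, sum_sigma_fin_div_mul hn]
    exact sum_sigma_fin_div_mul hn w fun i => ∑ j, w j * g i j
  have diag : ∑ x : Σ i, Fin (n i), w x.1 / n x.1 * (w x.1 / n x.1) * H x.1 =
      ∑ i, w i * (w i / n i * H i) := by
    simp only [mul_assoc]
    exact sum_sigma_fin_div_mul hn w fun i => w i / n i * H i
  have entry (i j : ι) : w i * w j * (if i = j then t - (1 - 1 / n i) * H i else t - D i j) =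
      w i * w j * g i j + if i = j then w i * (w i / n i * H i) else 0 := by
    simp only [g]
    split_ifs with hij
    · subst hij; ring
    · ring
  simp only [split, mul_add, sum_add_distrib, mul_ite, mul_zero, sum_ite_eq, mem_univ, if_true,
    off_diag, diag, entry]

end Blowup

theorem upper_subtree_psd_general (m : ℕ)
    (h : Fin m → Fin m → ℝ) (H : Fin m → ℝ) (nn : Fin m → ℕ)
    (h_symm : ∀ i j, h i j = h j i)
    (h_le_one : ∀ i j, i ≠ j → h i j ≤ 1)
    (h_max_twice : ∀ i j k, i ≠ j → j ≠ k → i ≠ k →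
      (h i j = max (h i j) (max (h j k) (h i k)) ∧
        h j k = max (h i j) (max (h j k) (h i k))) ∨
      (h i j = max (h i j) (max (h j k) (h i k)) ∧
        h i k = max (h i j) (max (h j k) (h i k))) ∨
      (h j k = max (h i j) (max (h j k) (h i k)) ∧
        h i k = max (h i j) (max (h j k) (h i k))))
    (H_nonneg : ∀ i, 0 ≤ H i) (H_le_one : ∀ i, H i ≤ 1)
    (H_le_h : ∀ i j, i ≠ j → H i ≤ h i j)
    (nn_pos : ∀ i, 1 ≤ nn i) :
    (Matrix.of fun i j : Fin m =>
      if i = j then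
        (1 - 1 / ((∑ t, nn t : ℕ) : ℝ)) - (1 - 1 / (nn i : ℝ)) * H i
      else
        (1 - 1 / ((∑ t, nn t : ℕ) : ℝ)) - h i j).PosSemidef := by
  have h_ultra (i j k : Fin m) (hij : i ≠ j) (hjk : j ≠ k) (hik : i ≠ k) :
      h i k ≤ max (h i j) (h j k) :=
    le_max_of_max_attained_twice (h_max_twice i j k hij hjk hik)
  refine .of_dotProduct_mulVec_nonneg ?_ fun w => ?_
  · ext i j
    by_cases hij : i = j
    · simp [hij]
    · simp [hij, Ne.symm hij, h_symm]
  have key := mul_sq_sum_div_card_le_of_ultrametric (blowupDist (β := fun i => Fin (nn i)) h H)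
    blowupDist_self (blowupDist_comm h_symm) (blowupDist_le_max H_nonneg H_le_h h_ultra)
    (blowupDist_le H_nonneg H_le_one h_le_one) fun x => w x.1 / nn x.1
  have sum_weights : ∑ x : Σ i, Fin (nn i), w x.1 / nn x.1 = ∑ i, w i := by
    simpa using sum_sigma_fin_div_mul nn_pos w 1
  rw [sum_sum_mul_sub_blowupDist nn_pos, sum_weights, Fintype.card_sigma] at key
  simp only [Fintype.card_fin] at key
  refine (sub_nonneg.mpr key).trans_eq ?_
  rw [one_mul, sq, sum_mul_sum, sum_div, ← sum_sub_distrib]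
  simp only [dotProduct, Matrix.mulVec, Matrix.of_apply, star_trivial, mul_sum, sum_div,
    ← sum_sub_distrib]
  refine sum_congr rfl fun i _ => sum_congr rfl fun j _ => ?_
  split_ifs <;> ring

/-- **Theorem (upper-subtree PSD inequality for ultrametric trees, matrix form).**
Given symmetric data `h i j ∈ [0,1]` (`i ≠ j`) satisfying the three-point condition
(the maximum among `h i j, h j k, h i k` is attained at least twice for pairwise
distinct `i, j, k`), heights `H i ∈ [0,1]` with `H i ≤ h i j` for `j ≠ i`, and positive
integers `n i` with `n = ∑ n i`, the `m × m` matrix with off-diagonal entries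
`(1 - 1/n) - h i j` and diagonal entries `(1 - 1/n) - (1 - 1/(n i)) * H i` is
positive semidefinite. -/
theorem upper_subtree_psd (m : ℕ) (hm : 1 ≤ m)
    (h : Fin m → Fin m → ℝ) (H : Fin m → ℝ) (nn : Fin m → ℕ)
    (h_symm : ∀ i j, h i j = h j i)
    (h_nonneg : ∀ i j, i ≠ j → 0 ≤ h i j)
    (h_le_one : ∀ i j, i ≠ j → h i j ≤ 1)
    (h_max_twice : ∀ i j k, i ≠ j → j ≠ k → i ≠ k →
      (h i j = max (h i j) (max (h j k) (h i k)) ∧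
        h j k = max (h i j) (max (h j k) (h i k))) ∨
      (h i j = max (h i j) (max (h j k) (h i k)) ∧
        h i k = max (h i j) (max (h j k) (h i k))) ∨
      (h j k = max (h i j) (max (h j k) (h i k)) ∧
        h i k = max (h i j) (max (h j k) (h i k))))
    (H_nonneg : ∀ i, 0 ≤ H i) (H_le_one : ∀ i, H i ≤ 1)
    (H_le_h : ∀ i j, i ≠ j → H i ≤ h i j)
    (nn_pos : ∀ i, 1 ≤ nn i) :
    (Matrix.of fun i j : Fin m =>
      if i = j then
        (1 - 1 / ((∑ t, nn t : ℕ) : ℝ)) - (1 - 1 / (nn i : ℝ)) * H i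
      else
        (1 - 1 / ((∑ t, nn t : ℕ) : ℝ)) - h i j).PosSemidef :=
  upper_subtree_psd_general m h H nn h_symm h_le_one h_max_twice H_nonneg H_le_one H_le_h nn_pos
end

section
/- Let n ≥ 1 and let d : Fin n → Fin n → ℝ be an ultrametric with d i j ≤ 2 for all i, j and d i j > 0 for all i ≠ j. Let c_d be the infimum of the set of real numbers c ≥ 0 such that the n × n matrix with entries c - d i j / 2 is positive semidefinite (this infimum exists and satisfies c_d ≤ 1 - 1/n). Then c_d = 1 - 1/n if and only if d i j = 2 for all i ≠ j. -/
/-!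
Write `Q_D(s, x) = ∑_{i,j ∈ s} x_i x_j (D - d i j)` (this is `distForm d D s x`), so that the
matrix `c - d / 2` is positive semidefinite iff `(2 - 2c) (∑ x)² ≤ Q_2(univ, x)` for all `x`.

If `d ≤ D` on `s`, then `(D / #s) (∑ x)² ≤ Q_D(s, x)`, by strong induction on `s`. Let `D'` be the
largest distance in `s`. The open ball of radius `D'` around a point and its complement in `s` are
at distance exactly `D'` from each other, so `Q_{D'}` splits over the two parts, and the bounds
`D' / m₁`, `D' / m₂` for the parts combine harmonically, `(t₁⁻¹ + t₂⁻¹)⁻¹`, to `D' / #s`; raising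
`D'` to `D` adds `(D - D') (∑ x)²`. This gives `c_d ≤ 1 - 1/n`. If two points of `s` are at distance
`< D`, the same induction yields a constant strictly larger than `D / #s`, hence `c_d < 1 - 1/n`.
For the star metric, `Q_2(univ, 1) = 2n`, which forces `c_d ≥ 1 - 1/n`.
-/

open Finset

structure IsUltrametric {ι : Type*} (d : ι → ι → ℝ) : Prop where
  apply_self : ∀ i, d i i = 0
  symm : ∀ i j, d i j = d j i
  le_max : ∀ i j k, d i j ≤ max (d i k) (d k j)
  pos_of_ne : ∀ i j, i ≠ j → 0 < d i j

def distForm {ι : Type*} (d : ι → ι → ℝ) (D : ℝ) (s : Finset ι) (x : ι → ℝ) : ℝ :=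
  ∑ i ∈ s, ∑ j ∈ s, x i * x j * (D - d i j)

lemma inv_add_inv_inv_mul_sq_add_le {t₁ t₂ a b q₁ q₂ : ℝ} (ht₁ : 0 < t₁) (ht₂ : 0 < t₂)
    (h₁ : t₁ * a ^ 2 ≤ q₁) (h₂ : t₂ * b ^ 2 ≤ q₂) :
    (t₁⁻¹ + t₂⁻¹)⁻¹ * (a + b) ^ 2 ≤ q₁ + q₂ := by
  have : (t₁⁻¹ + t₂⁻¹)⁻¹ * (a + b) ^ 2 ≤ t₁ * a ^ 2 + t₂ * b ^ 2 := by
    rw [inv_add_inv ht₁.ne' ht₂.ne', inv_div, div_mul_eq_mul_div, div_le_iff₀ (by positivity)]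
    nlinarith [sq_nonneg (t₁ * a - t₂ * b)]
  linarith

section

variable {ι : Type*} {d : ι → ι → ℝ}

lemma distForm_eq_sub_mul_sq_add (D D' : ℝ) (s : Finset ι) (x : ι → ℝ) :
    distForm d D s x = (D - D') * (∑ i ∈ s, x i) ^ 2 + distForm d D' s x := by
  rw [distForm, distForm, sq, sum_mul_sum, mul_sum, ← sum_add_distrib]
  refine sum_congr rfl fun i _ => ?_
  rw [mul_sum, ← sum_add_distrib]
  exact sum_congr rfl fun j _ => by ring

lemma add_sub_mul_sq_sum_le_distForm {t D D' : ℝ} {s : Finset ι} {x : ι → ℝ}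
    (h : t * (∑ i ∈ s, x i) ^ 2 ≤ distForm d D' s x) :
    (t + (D - D')) * (∑ i ∈ s, x i) ^ 2 ≤ distForm d D s x := by
  rw [distForm_eq_sub_mul_sq_add D D']
  linarith

namespace IsUltrametric

variable (hd : IsUltrametric d)
include hd

lemma le_max_dist_center (p i j : ι) : d i j ≤ max (d p i) (d p j) :=
  hd.symm p i ▸ hd.le_max i j p

lemma exists_mem_forall_le_dist_center (p : ι) {s : Finset ι} (hs : s.Nonempty) :
    ∃ j₀ ∈ s, ∀ i ∈ s, ∀ j ∈ s, d i j ≤ d p j₀ := by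
  obtain ⟨j₀, hj₀, hmax⟩ := s.exists_max_image (d p) hs
  exact ⟨j₀, hj₀, fun i hi j hj =>
    (hd.le_max_dist_center p i j).trans (max_le (hmax i hi) (hmax j hj))⟩

lemma eq_of_lt_of_le {p i j : ι} {D : ℝ} (hi : d p i < D) (hj : D ≤ d p j) (hij : d i j ≤ D) :
    d i j = D := by
  refine le_antisymm hij (not_lt.1 fun h => ?_)
  exact absurd (hd.le_max p j i) (not_le.2 ((max_lt hi h).trans_le hj))

lemma distForm_eq_add_distForm_ball {s : Finset ι} {D : ℝ} (hD : ∀ i ∈ s, ∀ j ∈ s, d i j ≤ D)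
    (p : ι) (x : ι → ℝ) :
    distForm d D s x =
      distForm d D {j ∈ s | d p j < D} x + distForm d D {j ∈ s | ¬d p j < D} x := by
  have split (f : ι → ℝ) :
      ∑ j ∈ s, f j = ∑ j ∈ s with d p j < D, f j + ∑ j ∈ s with ¬d p j < D, f j :=
    (sum_filter_add_sum_filter_not s _ f).symm
  have cross {i j} (hi : i ∈ s ∧ d p i < D) (hj : j ∈ s ∧ ¬d p j < D) :
      x i * x j * (D - d i j) = 0 ∧ x j * x i * (D - d j i) = 0 := by
    have := hd.eq_of_lt_of_le hi.2 (not_lt.1 hj.2) (hD i hi.1 j hj.1)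
    simp [this, hd.symm j i]
  simp only [distForm, split, sum_add_distrib]
  rw [sum_eq_zero fun i hi => sum_eq_zero fun j hj => (cross (mem_filter.1 hi) (mem_filter.1 hj)).1,
    sum_eq_zero fun i hi => sum_eq_zero fun j hj => (cross (mem_filter.1 hj) (mem_filter.1 hi)).2]
  ring

lemma inv_add_inv_inv_mul_sq_sum_le_distForm {s : Finset ι} {D t₁ t₂ : ℝ}
    (hD : ∀ i ∈ s, ∀ j ∈ s, d i j ≤ D) (p : ι) (x : ι → ℝ) (ht₁ : 0 < t₁) (ht₂ : 0 < t₂)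
    (h₁ : t₁ * (∑ i ∈ s with d p i < D, x i) ^ 2 ≤ distForm d D {j ∈ s | d p j < D} x)
    (h₂ : t₂ * (∑ i ∈ s with ¬d p i < D, x i) ^ 2 ≤ distForm d D {j ∈ s | ¬d p j < D} x) :
    (t₁⁻¹ + t₂⁻¹)⁻¹ * (∑ i ∈ s, x i) ^ 2 ≤ distForm d D s x := by
  rw [hd.distForm_eq_add_distForm_ball hD p, ← sum_filter_add_sum_filter_not s (d p · < D)]
  exact inv_add_inv_inv_mul_sq_add_le ht₁ ht₂ h₁ h₂

theorem div_card_mul_sq_sum_le_distForm {s : Finset ι} {D : ℝ}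
    (hD : ∀ i ∈ s, ∀ j ∈ s, d i j ≤ D) (x : ι → ℝ) :
    D / #s * (∑ i ∈ s, x i) ^ 2 ≤ distForm d D s x := by
  induction s using Finset.strongInduction generalizing D with
  | H s ih =>
  rcases s.eq_empty_or_nonempty with rfl | hne
  · simp [distForm]
  rcases hne.exists_eq_singleton_or_nontrivial with ⟨a, rfl⟩ | ⟨p, hp, q, hq, hpq⟩
  · simp [distForm, hd.apply_self, sq, mul_comm]
  obtain ⟨j₀, hj₀, hD'⟩ := hd.exists_mem_forall_le_dist_center p ⟨p, hp⟩
  set D' := d p j₀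
  have hD'_pos : 0 < D' := (hd.pos_of_ne p q hpq).trans_le (hD' p hp q hq)
  set C := {j ∈ s | d p j < D'}
  set R := {j ∈ s | ¬d p j < D'}
  have hpC : p ∈ C := mem_filter.2 ⟨hp, by rwa [hd.apply_self]⟩
  have hj₀R : j₀ ∈ R := mem_filter.2 ⟨hj₀, lt_irrefl _⟩
  have hC := ih C (filter_ssubset.2 ⟨j₀, hj₀, lt_irrefl _⟩)
    fun i hi j hj => hD' i (filter_subset _ _ hi) j (filter_subset _ _ hj)
  have hR := ih R (filter_ssubset.2 ⟨p, hp, not_not.2 (mem_filter.1 hpC).2⟩)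
    fun i hi j hj => hD' i (filter_subset _ _ hi) j (filter_subset _ _ hj)
  have hC_pos : (0 : ℝ) < #C := by exact_mod_cast card_pos.2 ⟨p, hpC⟩
  have hR_pos : (0 : ℝ) < #R := by exact_mod_cast card_pos.2 ⟨j₀, hj₀R⟩
  have hcard : (#C : ℝ) + #R = #s := by exact_mod_cast card_filter_add_card_filter_not _
  have hs : (1 : ℝ) ≤ #s := by exact_mod_cast one_le_card.2 ⟨p, hp⟩
  have hmax_level := hd.inv_add_inv_inv_mul_sq_sum_le_distForm hD' p x
    (div_pos hD'_pos hC_pos) (div_pos hD'_pos hR_pos) hC hR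
  rw [inv_div, inv_div, ← add_div, hcard, inv_div] at hmax_level
  have hle : D / #s ≤ D' / #s + (D - D') :=
    calc D / #s = D' / #s + (D - D') / #s := by ring
      _ ≤ D' / #s + (D - D') := by gcongr; exact div_le_self (sub_nonneg.2 (hD p hp j₀ hj₀)) hs
  exact (mul_le_mul_of_nonneg_right hle (sq_nonneg _)).trans
    (add_sub_mul_sq_sum_le_distForm hmax_level)

theorem exists_lt_div_card_mul_sq_sum_le_distForm {s : Finset ι} {D : ℝ}
    (hD : ∀ i ∈ s, ∀ j ∈ s, d i j ≤ D) {p q : ι} (hp : p ∈ s) (hq : q ∈ s) (hpq : p ≠ q)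
    (hlt : d p q < D) :
    ∃ t, D / #s < t ∧ ∀ x : ι → ℝ, t * (∑ i ∈ s, x i) ^ 2 ≤ distForm d D s x := by
  induction s using Finset.strongInduction generalizing D with
  | H s ih =>
  have hs : (1 : ℝ) < #s := by exact_mod_cast one_lt_card.2 ⟨p, hp, q, hq, hpq⟩
  have hD_pos : 0 < D := (hd.pos_of_ne p q hpq).trans hlt
  by_cases hball : ∀ j ∈ s, d p j < D
  · obtain ⟨j₀, hj₀, hD'⟩ := hd.exists_mem_forall_le_dist_center p ⟨p, hp⟩
    set D' := d p j₀
    refine ⟨D' / #s + (D - D'), ?_, fun x =>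
      add_sub_mul_sq_sum_le_distForm (hd.div_card_mul_sq_sum_le_distForm hD' x)⟩
    calc D / #s = D' / #s + (D - D') / #s := by ring
      _ < D' / #s + (D - D') := by gcongr; exact div_lt_self (sub_pos.2 (hball j₀ hj₀)) hs
  push Not at hball
  obtain ⟨j₁, hj₁, hj₁D⟩ := hball
  set C := {j ∈ s | d p j < D}
  set R := {j ∈ s | ¬d p j < D}
  have hpC : p ∈ C := mem_filter.2 ⟨hp, by rwa [hd.apply_self]⟩
  have hj₁R : j₁ ∈ R := mem_filter.2 ⟨hj₁, not_lt.2 hj₁D⟩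
  have hDC : ∀ i ∈ C, ∀ j ∈ C, d i j ≤ D := fun i hi j hj =>
    hD i (filter_subset _ _ hi) j (filter_subset _ _ hj)
  have hDR : ∀ i ∈ R, ∀ j ∈ R, d i j ≤ D := fun i hi j hj =>
    hD i (filter_subset _ _ hi) j (filter_subset _ _ hj)
  obtain ⟨t₁, ht₁, hC⟩ := ih C (filter_ssubset.2 ⟨j₁, hj₁, not_lt.2 hj₁D⟩) hDC hpC
    (mem_filter.2 ⟨hq, hlt⟩) hlt
  have hC_pos : (0 : ℝ) < #C := by exact_mod_cast card_pos.2 ⟨p, hpC⟩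
  have hR_pos : (0 : ℝ) < #R := by exact_mod_cast card_pos.2 ⟨j₁, hj₁R⟩
  have hcard : (#C : ℝ) + #R = #s := by exact_mod_cast card_filter_add_card_filter_not _
  have ht₁_pos : 0 < t₁ := (div_pos hD_pos hC_pos).trans ht₁
  refine ⟨(t₁⁻¹ + (D / #R)⁻¹)⁻¹, ?_, fun x => hd.inv_add_inv_inv_mul_sq_sum_le_distForm hD p x
    ht₁_pos (div_pos hD_pos hR_pos) (hC x) (hd.div_card_mul_sq_sum_le_distForm hDR x)⟩
  rw [lt_inv_comm₀ (div_pos hD_pos (by linarith)) (by positivity), inv_div, inv_div, ← hcard,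
    add_div]
  gcongr
  rwa [← inv_div, inv_lt_inv₀ ht₁_pos (div_pos hD_pos hC_pos)]

end IsUltrametric
end

section

variable {ι : Type*} [Fintype ι] {d : ι → ι → ℝ}

lemma distForm_univ_one_of_forall_ne {D : ℝ} (hdiag : ∀ i, d i i = 0)
    (h : ∀ i j, i ≠ j → d i j = D) :
    distForm d D univ (fun _ => 1) = D * Fintype.card ι := by
  classical
  have hD (i j : ι) : D - d i j = if i = j then D else 0 := by
    split_ifs with hij
    · simp [hij, hdiag]
    · simp [h i j hij]
  simp [distForm, hD, mul_comm]

lemma dotProduct_mulVec_sub_div_two (c : ℝ) (x : ι → ℝ) :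
    star x ⬝ᵥ (Matrix.of fun i j : ι => c - d i j / 2).mulVec x =
      (distForm d 2 univ x - (2 - 2 * c) * (∑ i, x i) ^ 2) / 2 := by
  rw [distForm_eq_sub_mul_sq_add 2 (2 * c), add_sub_cancel_left]
  simp only [dotProduct, Matrix.mulVec, Pi.star_apply, star_trivial, Matrix.of_apply, distForm,
    sum_div, mul_sum]
  exact sum_congr rfl fun i _ => sum_congr rfl fun j _ => by ring

lemma posSemidef_sub_div_two_iff (hsymm : ∀ i j, d i j = d j i) (c : ℝ) :
    (Matrix.of fun i j : ι => c - d i j / 2).PosSemidef ↔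
      ∀ x, (2 - 2 * c) * (∑ i, x i) ^ 2 ≤ distForm d 2 univ x := by
  have hherm : (Matrix.of fun i j : ι => c - d i j / 2).IsHermitian :=
    Matrix.IsHermitian.ext fun i j => by simp [hsymm i j]
  simp only [Matrix.posSemidef_iff_dotProduct_mulVec, hherm, dotProduct_mulVec_sub_div_two,
    true_and]
  exact forall_congr' fun x => by constructor <;> intro h <;> linarith

lemma one_sub_div_card_le_of_posSemidef [Nonempty ι] (hdiag : ∀ i, d i i = 0)
    (hstar : ∀ i j, i ≠ j → d i j = 2) {c : ℝ}
    (hc : (Matrix.of fun i j : ι => c - d i j / 2).PosSemidef) :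
    1 - 1 / (Fintype.card ι : ℝ) ≤ c := by
  have h := hc.dotProduct_mulVec_nonneg fun _ => 1
  simp only [dotProduct_mulVec_sub_div_two, distForm_univ_one_of_forall_ne hdiag hstar,
    sum_const, card_univ, nsmul_eq_mul, mul_one] at h
  have hcard : (0 : ℝ) < Fintype.card ι := by exact_mod_cast Fintype.card_pos
  rw [sub_le_comm, le_div_iff₀ hcard]
  nlinarith

namespace IsUltrametric

variable (hd : IsUltrametric d)
include hd

lemma posSemidef_one_sub_div_card (hD : ∀ i j, d i j ≤ 2) :
    (Matrix.of fun i j : ι => (1 - 1 / (Fintype.card ι : ℝ)) - d i j / 2).PosSemidef := by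
  refine (posSemidef_sub_div_two_iff hd.symm _).2 fun x => ?_
  convert hd.div_card_mul_sq_sum_le_distForm (fun i _ j _ => hD i j) x using 2
  simp only [card_univ]
  ring

lemma exists_posSemidef_lt_one_sub_div_card (hD : ∀ i j, d i j ≤ 2) {p q : ι} (hpq : p ≠ q)
    (hlt : d p q < 2) :
    ∃ c, 0 ≤ c ∧ c < 1 - 1 / (Fintype.card ι : ℝ) ∧
      (Matrix.of fun i j : ι => c - d i j / 2).PosSemidef := by
  obtain ⟨t, ht, htQ⟩ := hd.exists_lt_div_card_mul_sq_sum_le_distForm (fun i _ j _ => hD i j)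
    (mem_univ p) (mem_univ q) hpq hlt
  rw [card_univ] at ht
  have hcard : (1 : ℝ) < Fintype.card ι := by exact_mod_cast Fintype.one_lt_card_iff.2 ⟨p, q, hpq⟩
  refine ⟨max 0 (1 - t / 2), le_max_left _ _, max_lt ?_ ?_, ?_⟩
  · exact sub_pos.2 ((div_lt_one (by linarith)).2 hcard)
  · linarith [show 2 / (Fintype.card ι : ℝ) = 2 * (1 / Fintype.card ι) by ring]
  · refine (posSemidef_sub_div_two_iff hd.symm _).2 fun x => ?_
    exact (mul_le_mul_of_nonneg_right (by linarith [le_max_right 0 (1 - t / 2)])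
      (sq_nonneg _)).trans (htQ x)

end IsUltrametric

end

theorem equality_case_ultrametric_general (n : ℕ) (hn : 1 ≤ n) (d : Fin n → Fin n → ℝ)
    (h_diag : ∀ i, d i i = 0)
    (h_symm : ∀ i j, d i j = d j i)
    (h_ultra : ∀ i j k, d i j ≤ max (d i k) (d k j))
    (h_bound : ∀ i j, d i j ≤ 2)
    (h_pos : ∀ i j, i ≠ j → 0 < d i j) :
    sInf {c : ℝ | 0 ≤ c ∧
        (Matrix.of fun i j : Fin n => c - d i j / 2).PosSemidef} = 1 - 1 / (n : ℝ) ↔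
      ∀ i j, i ≠ j → d i j = 2 := by
  have hd : IsUltrametric d := ⟨h_diag, h_symm, h_ultra, h_pos⟩
  have : Nonempty (Fin n) := ⟨⟨0, hn⟩⟩
  have hbdd : BddBelow {c : ℝ | 0 ≤ c ∧
      (Matrix.of fun i j : Fin n => c - d i j / 2).PosSemidef} := ⟨0, fun _ hc => hc.1⟩
  have htop : 0 ≤ 1 - 1 / (n : ℝ) ∧
      (Matrix.of fun i j : Fin n => (1 - 1 / (n : ℝ)) - d i j / 2).PosSemidef := by
    refine ⟨sub_nonneg.2 ((div_le_one (by positivity)).2 (by exact_mod_cast hn)), ?_⟩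
    simpa using hd.posSemidef_one_sub_div_card h_bound
  constructor
  · intro hinf
    by_contra! ⟨p, q, hpq, hne⟩
    obtain ⟨c, hc₀, hlt, hc⟩ :=
      hd.exists_posSemidef_lt_one_sub_div_card h_bound hpq ((h_bound p q).lt_of_ne hne)
    rw [Fintype.card_fin] at hlt
    linarith [hinf ▸ csInf_le hbdd ⟨hc₀, hc⟩]
  · intro hstar
    refine IsLeast.csInf_eq ⟨htop, fun c hc => ?_⟩
    simpa using one_sub_div_card_le_of_posSemidef h_diag hstar hc.2

/-- **Theorem (equality case).** Let `d` be an ultrametric on `n ≥ 1` points with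
`d i j ≤ 2` for all `i, j` and `d i j > 0` for `i ≠ j` (a leaf-positive ultrametric of
radius at most 1).  Let `c_d` be the infimum of all `c ≥ 0` for which the matrix with
entries `c - d i j / 2` is positive semidefinite.  Then `c_d = 1 - 1/n` if and only if
`d i j = 2` for all `i ≠ j` (the star metric). -/
theorem equality_case_ultrametric (n : ℕ) (hn : 1 ≤ n) (d : Fin n → Fin n → ℝ)
    (h_diag : ∀ i, d i i = 0)
    (h_symm : ∀ i j, d i j = d j i)
    (h_nonneg : ∀ i j, 0 ≤ d i j)
    (h_ultra : ∀ i j k, d i j ≤ max (d i k) (d k j))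
    (h_bound : ∀ i j, d i j ≤ 2)
    (h_pos : ∀ i j, i ≠ j → 0 < d i j) :
    sInf {c : ℝ | 0 ≤ c ∧
        (Matrix.of fun i j : Fin n => c - d i j / 2).PosSemidef} = 1 - 1 / (n : ℝ) ↔
      ∀ i j, i ≠ j → d i j = 2 :=
  equality_case_ultrametric_general n hn d h_diag h_symm h_ultra h_bound h_pos
end

section
/- Let E be a finite set and let ν : Finset E → ℝ ∪ {−∞} be M♮-concave with ν(S) ≠ −∞ whenever |S| ≤ 2. Fix a real number q with 0 < q ≤ 1 and define d : E → E → ℝ by d(i,i) = 0 and, for i ≠ j, d(i,j) = 2·q^(−ν({i,j}) + ν({i}) + ν({j}) − ν(∅)) (all exponents being real numbers by hypothesis). Then d is an ultrametric of radius at most 1: d is symmetric, nonnegative, satisfies d(i,j) ≤ max(d(i,k), d(k,j)) for all i, j, k ∈ E, and d(i,j) ≤ 2 for all i, j. -/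
/-!
Write `g(i, j) = ν{i} + ν{j} - ν{i,j} - ν ∅`, so that `d i j = 2 q ^ g(i, j)`. Exchanging `i` out
of `{i, j}` into `∅` gives `g ≥ 0`, hence `d ≤ 2`. Exchanging `i` out of `{i, j}` into `{k}` gives
`g(i, j) ≥ min (g(i, k), g(k, j))`, and since `x ↦ q ^ x` is antitone for `0 < q ≤ 1` this is the
ultrametric inequality for `d`.
-/

/-- A function `ν : Finset E → ℝ ∪ {−∞}` is M♮-concave if it satisfies the exchange
property: for all `I₁, I₂` and `i₁ ∈ I₁ \ I₂`, either
`ν I₁ + ν I₂ ≤ ν (I₁ \ {i₁}) + ν (I₂ ∪ {i₁})`, or there is `i₂ ∈ I₂ \ I₁` with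
`ν I₁ + ν I₂ ≤ ν ((I₁ \ {i₁}) ∪ {i₂}) + ν ((I₂ \ {i₂}) ∪ {i₁})`. -/
def MNatConcave {E : Type*} [DecidableEq E] (ν : Finset E → WithBot ℝ) : Prop :=
  ∀ I₁ I₂ : Finset E, ∀ i₁ ∈ I₁ \ I₂,
    (ν I₁ + ν I₂ ≤ ν (I₁.erase i₁) + ν (insert i₁ I₂)) ∨
    (∃ i₂ ∈ I₂ \ I₁,
      ν I₁ + ν I₂ ≤ ν (insert i₂ (I₁.erase i₁)) + ν (insert i₁ (I₂.erase i₂)))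

open Finset

theorem WithBot.unbotD_add_le_unbotD_add {α : Type*} [Zero α] [Add α] [LE α]
    {a b c d : WithBot α} (ha : a ≠ ⊥) (hb : b ≠ ⊥) (h : a + b ≤ c + d) :
    a.unbotD 0 + b.unbotD 0 ≤ c.unbotD 0 + d.unbotD 0 := by
  lift a to α using ha
  lift b to α using hb
  have hc : c ≠ ⊥ := by rintro rfl; simp at h
  have hd : d ≠ ⊥ := by rintro rfl; simp at h
  lift c to α using hc
  lift d to α using hd
  simpa only [WithBot.unbotD_coe, ← WithBot.coe_add, WithBot.coe_le_coe] using h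

theorem Real.rpow_le_max_of_min_le {q x y z : ℝ} (hq0 : 0 < q) (hq1 : q ≤ 1)
    (h : min y z ≤ x) : q ^ x ≤ max (q ^ y) (q ^ z) := by
  calc q ^ x ≤ q ^ min y z := Real.rpow_le_rpow_of_exponent_ge hq0 hq1 h
    _ = max (q ^ y) (q ^ z) := (Real.antitone_rpow_of_base_le_one hq0 hq1).map_min

namespace MNatConcave

variable {E : Type*} [DecidableEq E] {ν : Finset E → WithBot ℝ}

theorem pair_add_empty_le (hν : MNatConcave ν) {i j : E} (hij : i ≠ j) :
    ν {i, j} + ν ∅ ≤ ν {i} + ν {j} := by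
  rcases hν {i, j} ∅ i (by simp) with h | ⟨_, h, _⟩
  · rwa [erase_insert (by simp [hij]), add_comm (ν {j})] at h
  · simp at h

theorem pair_add_singleton_le (hν : MNatConcave ν) {i j k : E} (hij : i ≠ j) (hki : k ≠ i) :
    ν {i, j} + ν {k} ≤ ν {j} + ν {i, k} ∨ ν {i, j} + ν {k} ≤ ν {k, j} + ν {i} := by
  have herase : ({i, j} : Finset E).erase i = {j} := erase_insert (by simp [hij])
  rcases hν {i, j} {k} i (by simp [hki.symm]) with h | ⟨i₂, hi₂, h⟩
  · exact .inl (by rwa [herase] at h)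
  · obtain rfl : i₂ = k := by simpa using (mem_sdiff.mp hi₂).1
    exact .inr (by rwa [herase, erase_singleton] at h)

end MNatConcave

section PairGap

variable {E : Type*} [DecidableEq E]

noncomputable def pairGap (ν : Finset E → WithBot ℝ) (i j : E) : ℝ :=
  -WithBot.unbotD 0 (ν {i, j}) + WithBot.unbotD 0 (ν {i}) + WithBot.unbotD 0 (ν {j})
    - WithBot.unbotD 0 (ν ∅)

variable {ν : Finset E → WithBot ℝ}

theorem pairGap_comm (ν : Finset E → WithBot ℝ) (i j : E) : pairGap ν i j = pairGap ν j i := by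
  rw [pairGap, pairGap, pair_comm]
  ring

theorem pairGap_nonneg (hν : MNatConcave ν) (hdom : ∀ S : Finset E, S.card ≤ 2 → ν S ≠ ⊥)
    {i j : E} (hij : i ≠ j) : 0 ≤ pairGap ν i j := by
  have := WithBot.unbotD_add_le_unbotD_add (hdom _ (card_le_two (a := i) (b := j)))
    (hdom ∅ (by simp)) (hν.pair_add_empty_le hij)
  rw [pairGap]
  linarith

theorem min_pairGap_le (hν : MNatConcave ν) (hdom : ∀ S : Finset E, S.card ≤ 2 → ν S ≠ ⊥)
    {i j k : E} (hij : i ≠ j) (hki : k ≠ i) :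
    min (pairGap ν i k) (pairGap ν k j) ≤ pairGap ν i j := by
  have hpair : ν {i, j} ≠ ⊥ := hdom _ card_le_two
  have hk : ν {k} ≠ ⊥ := hdom _ (by simp)
  simp only [min_le_iff, pairGap]
  rcases hν.pair_add_singleton_le hij hki with h | h
  · have := WithBot.unbotD_add_le_unbotD_add hpair hk h
    left; linarith
  · have := WithBot.unbotD_add_le_unbotD_add hpair hk h
    right; linarith

end PairGap

theorem le_max_of_eq_two_mul_rpow {E : Type*} {q : ℝ} (hq0 : 0 < q) (hq1 : q ≤ 1)
    {g d : E → E → ℝ}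
    (hg : ∀ i j k, i ≠ j → k ≠ i → k ≠ j → min (g i k) (g k j) ≤ g i j)
    (hd_diag : ∀ i, d i i = 0) (hd_off : ∀ i j, i ≠ j → d i j = 2 * q ^ g i j)
    (hd_nonneg : ∀ i j, 0 ≤ d i j) (i j k : E) : d i j ≤ max (d i k) (d k j) := by
  rcases eq_or_ne i j with rfl | hij
  · exact (hd_diag i).symm ▸ le_max_of_le_left (hd_nonneg i k)
  rcases eq_or_ne k i with rfl | hki
  · exact le_max_of_le_right le_rfl
  rcases eq_or_ne k j with rfl | hkj
  · exact le_max_of_le_left le_rfl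
  rw [hd_off i j hij, hd_off i k hki.symm, hd_off k j hkj, ← mul_max_of_nonneg _ _ two_pos.le]
  gcongr
  exact Real.rpow_le_max_of_min_le hq0 hq1 (hg i j k hij hki hkj)

theorem mNatConcave_ultrametric_general {E : Type*} [DecidableEq E]
    (ν : Finset E → WithBot ℝ) (hν : MNatConcave ν)
    (hdom : ∀ S : Finset E, S.card ≤ 2 → ν S ≠ ⊥)
    (q : ℝ) (hq0 : 0 < q) (hq1 : q ≤ 1)
    (d : E → E → ℝ)
    (hd_diag : ∀ i, d i i = 0)
    (hd_off : ∀ i j, i ≠ j → d i j =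
      2 * q ^ (-WithBot.unbotD 0 (ν {i, j}) + WithBot.unbotD 0 (ν {i}) + WithBot.unbotD 0 (ν {j})
        - WithBot.unbotD 0 (ν ∅))) :
    (∀ i j, d i j = d j i) ∧
    (∀ i j, 0 ≤ d i j) ∧
    (∀ i j k, d i j ≤ max (d i k) (d k j)) ∧
    (∀ i j, d i j ≤ 2) := by
  replace hd_off : ∀ i j, i ≠ j → d i j = 2 * q ^ pairGap ν i j := hd_off
  have hd_nonneg : ∀ i j, 0 ≤ d i j := fun i j ↦ by
    rcases eq_or_ne i j with rfl | hij
    · exact (hd_diag i).ge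
    · rw [hd_off i j hij]; positivity
  refine ⟨fun i j ↦ ?_, hd_nonneg,
    le_max_of_eq_two_mul_rpow (g := pairGap ν) hq0 hq1 (fun _ _ _ hij hki _ ↦ min_pairGap_le hν hdom hij hki)
      hd_diag hd_off hd_nonneg, fun i j ↦ ?_⟩
  · rcases eq_or_ne i j with rfl | hij
    · rfl
    · rw [hd_off i j hij, hd_off j i hij.symm, pairGap_comm]
  · rcases eq_or_ne i j with rfl | hij
    · rw [hd_diag]; norm_num
    · rw [hd_off i j hij]
      have := Real.rpow_le_one hq0.le hq1 (pairGap_nonneg hν hdom hij)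
      linarith

/-- **Lemma (ultrametric from an M♮-concave function).** If `ν` is M♮-concave with
`ν S ≠ −∞` for all `S` with `|S| ≤ 2`, and `0 < q ≤ 1`, then
`d i j = 2 q^{-ν{i,j} + ν{i} + ν{j} - ν ∅}` (and `d i i = 0`) is a symmetric nonnegative
ultrametric on `E` with all values at most `2` (radius at most 1). -/
theorem mNatConcave_ultrametric {E : Type*} [Fintype E] [DecidableEq E]
    (ν : Finset E → WithBot ℝ) (hν : MNatConcave ν)
    (hdom : ∀ S : Finset E, S.card ≤ 2 → ν S ≠ ⊥)
    (q : ℝ) (hq0 : 0 < q) (hq1 : q ≤ 1)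
    (d : E → E → ℝ)
    (hd_diag : ∀ i, d i i = 0)
    (hd_off : ∀ i j, i ≠ j → d i j =
      2 * q ^ (-WithBot.unbotD 0 (ν {i, j}) + WithBot.unbotD 0 (ν {i}) + WithBot.unbotD 0 (ν {j})
        - WithBot.unbotD 0 (ν ∅))) :
    (∀ i j, d i j = d j i) ∧
    (∀ i j, 0 ≤ d i j) ∧
    (∀ i j k, d i j ≤ max (d i k) (d k j)) ∧
    (∀ i j, d i j ≤ 2) :=
  mNatConcave_ultrametric_general ν hν hdom q hq0 hq1 d hd_diag hd_off
end

section
/- Let E be a finite set with |E| = n ≥ 1, let ν : Finset E → ℝ be a real-valued M♮-concave function (so its effective domain is all of 2^E), and let 0 < q ≤ 1. Then the n × n symmetric matrix C indexed by E with entries C i j = −(1 − 1/n) + q^(−ν({i,j}) + ν({i}) + ν({j}) − ν(∅)) for i ≠ j and C i i = −(1 − 1/n) is negative semidefinite. -/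
/-- M♮-concavity for a real-valued function `ν : Finset E → ℝ`
(effective domain all of `2^E`). -/
def MNatConcaveReal {E : Type*} [DecidableEq E] (ν : Finset E → ℝ) : Prop :=
  ∀ I₁ I₂ : Finset E, ∀ i₁ ∈ I₁ \ I₂,
    (ν I₁ + ν I₂ ≤ ν (I₁.erase i₁) + ν (insert i₁ I₂)) ∨
    (∃ i₂ ∈ I₂ \ I₁,
      ν I₁ + ν I₂ ≤ ν (insert i₂ (I₁.erase i₁)) + ν (insert i₁ (I₂.erase i₂)))

/-!
With `a i j = ν {i} + ν {j} - ν {i, j} - ν ∅`, the exchange axiom applied to `{i, j}, ∅` and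
to `{i, k}, {j}` gives `a ≥ 0` off the diagonal and `min (a i j) (a j k) ≤ a i k`, so
`w = q ^ a` takes values in `(0, 1]` and satisfies the ultrametric inequality
`w i k ≤ max (w i j) (w j k)`. The matrix `-C` is `(1 - 1/n)` times the all-ones matrix minus the
off-diagonal part of `w`, so it suffices that `∑_{i ≠ j ∈ B} w i j x i x j ≤ s (1 - 1/|B|) (∑_B x)²`
whenever the off-diagonal values on `B` are at most `s`. By induction on `B`: the ultrametric
inequality splits `B` into two blocks all of whose cross values equal the maximum `t`, and the two
block bounds combine through `(S + T)² / (c + d) ≤ S² / c + T² / d`.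
-/

open Finset
open scoped Matrix

section SubmodularGap

variable {E : Type*} [DecidableEq E]

def submodularGap (ν : Finset E → ℝ) (i j : E) : ℝ :=
  -ν {i, j} + ν {i} + ν {j} - ν ∅

lemma submodularGap_comm (ν : Finset E → ℝ) (i j : E) :
    submodularGap ν i j = submodularGap ν j i := by
  simp only [submodularGap, pair_comm i j]
  ring

lemma pair_erase_left {i j : E} (hij : i ≠ j) : ({i, j} : Finset E).erase i = {j} :=
  erase_insert (notMem_singleton.mpr hij)

namespace MNatConcaveReal

variable {ν : Finset E → ℝ}

lemma submodularGap_nonneg (hν : MNatConcaveReal ν) {i j : E} (hij : i ≠ j) :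
    0 ≤ submodularGap ν i j := by
  rcases hν {i, j} ∅ i (by simp) with h | ⟨_, h, _⟩
  · rw [pair_erase_left hij, insert_empty] at h
    unfold submodularGap
    linarith
  · simp at h

lemma min_submodularGap_le (hν : MNatConcaveReal ν) {i j k : E} (hij : i ≠ j) (hik : i ≠ k) :
    min (submodularGap ν i j) (submodularGap ν j k) ≤ submodularGap ν i k := by
  rcases hν {i, k} {j} i (by simp [hij, hik]) with h | ⟨j', hj', h⟩
  · rw [pair_erase_left hik] at h
    refine (min_le_left _ _).trans ?_
    unfold submodularGap
    linarith
  · obtain rfl : j' = j := mem_singleton.mp (mem_sdiff.mp hj').1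
    rw [pair_erase_left hik, erase_singleton, insert_empty] at h
    refine (min_le_right _ _).trans ?_
    unfold submodularGap
    linarith

end MNatConcaveReal

end SubmodularGap

section OffDiagQuadForm

variable {E : Type*} [DecidableEq E] {w : E → E → ℝ} (x : E → ℝ)

def offDiagQuadForm (w : E → E → ℝ) (x : E → ℝ) (B : Finset E) : ℝ :=
  ∑ i ∈ B, ∑ j ∈ B, if i = j then 0 else w i j * x i * x j

lemma offDiagQuadForm_eq_zero_of_card_le_one {B : Finset E} (hB : #B ≤ 1) :
    offDiagQuadForm w x B = 0 :=
  sum_eq_zero fun i hi => sum_eq_zero fun j hj => if_pos (card_le_one.mp hB i hi j hj)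

lemma offDiagQuadForm_eq_of_cross_eq (hw : ∀ i j, w i j = w j i) {B C : Finset E}
    (hCB : C ⊆ B) {t : ℝ} (hcross : ∀ i ∈ C, ∀ j ∈ B \ C, w i j = t) :
    offDiagQuadForm w x B = offDiagQuadForm w x C + offDiagQuadForm w x (B \ C) +
      2 * t * (∑ i ∈ C, x i) * ∑ j ∈ B \ C, x j := by
  have hsplit (f : E → ℝ) : ∑ i ∈ B, f i = ∑ i ∈ C, f i + ∑ i ∈ B \ C, f i := by
    rw [← sum_sdiff hCB, add_comm]
  have hne {i j : E} (hi : i ∈ C) (hj : j ∈ B \ C) : i ≠ j := by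
    rintro rfl
    exact (mem_sdiff.mp hj).2 hi
  have hCD : ∑ i ∈ C, ∑ j ∈ B \ C, (if i = j then 0 else w i j * x i * x j) =
      t * (∑ i ∈ C, x i) * ∑ j ∈ B \ C, x j := by
    simp_rw [mul_assoc t, sum_mul_sum, mul_sum]
    refine sum_congr rfl fun i hi => sum_congr rfl fun j hj => ?_
    rw [if_neg (hne hi hj), hcross i hi j hj]
    ring
  have hDC : ∑ i ∈ B \ C, ∑ j ∈ C, (if i = j then 0 else w i j * x i * x j) =
      t * (∑ i ∈ C, x i) * ∑ j ∈ B \ C, x j := by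
    rw [sum_comm, ← hCD]
    refine sum_congr rfl fun i hi => sum_congr rfl fun j hj => ?_
    rw [if_neg (hne hi hj), if_neg (hne hi hj).symm, hw]
    ring
  simp only [offDiagQuadForm, hsplit, sum_add_distrib, hCD, hDC]
  ring

/-- Splitting off the elements `j` with `w i₀ j < t`, where `w i₀ j₀ = t` is the largest
off-diagonal value, leaves a partition whose cross values all equal `t`. -/
lemma exists_cross_eq_of_ultrametric
    (hw : ∀ i j k, i ≠ j → i ≠ k → j ≠ k → w i k ≤ max (w i j) (w j k))
    {B : Finset E} (hB : 1 < #B) :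
    ∃ C ⊆ B, C.Nonempty ∧ (B \ C).Nonempty ∧ ∃ t : ℝ,
      (∀ i ∈ B, ∀ j ∈ B, i ≠ j → w i j ≤ t) ∧ ∀ i ∈ C, ∀ j ∈ B \ C, w i j = t := by
  obtain ⟨a, ha, b, hb, hab⟩ := one_lt_card.mp hB
  obtain ⟨⟨i₀, j₀⟩, hp, hmax⟩ := B.offDiag.exists_max_image (fun p => w p.1 p.2)
    ⟨(a, b), mem_offDiag.mpr ⟨ha, hb, hab⟩⟩
  obtain ⟨hi₀, hj₀, hij₀⟩ := mem_offDiag.mp hp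
  have hle : ∀ i ∈ B, ∀ j ∈ B, i ≠ j → w i j ≤ w i₀ j₀ :=
    fun i hi j hj hij => hmax (i, j) (mem_offDiag.mpr ⟨hi, hj, hij⟩)
  refine ⟨B.filter (fun j => j = i₀ ∨ w i₀ j < w i₀ j₀), filter_subset _ _,
    ⟨i₀, by simp [hi₀]⟩, ⟨j₀, by simp [hj₀, hij₀.symm]⟩, w i₀ j₀, hle, ?_⟩
  intro i hi j hj
  simp only [mem_sdiff, mem_filter, not_and, not_or, not_lt] at hi hj
  obtain ⟨hjB, hj⟩ := hj
  obtain ⟨hji₀, hj_ge⟩ := hj hjB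
  have hij : i ≠ j := by
    rintro rfl
    rcases hi.2 with h | h
    exacts [hji₀ h, not_le.mpr h hj_ge]
  refine le_antisymm (hle i hi.1 j hjB hij) ?_
  rcases eq_or_ne i₀ i with rfl | hi₀i
  · exact hj_ge
  · have hi_lt := hi.2.resolve_left hi₀i.symm
    rcases le_max_iff.mp (hw i₀ i j hi₀i (Ne.symm hji₀) hij) with h | h
    · exact absurd (hj_ge.trans h) (not_le.mpr hi_lt)
    · exact hj_ge.trans h

lemma two_block_le {t c d : ℝ} (ht : 0 ≤ t) (hc : 0 < c) (hd : 0 < d) (S T : ℝ) :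
    t * (1 - 1 / c) * S ^ 2 + t * (1 - 1 / d) * T ^ 2 + 2 * t * S * T ≤
      t * (1 - 1 / (c + d)) * (S + T) ^ 2 := by
  have hcauchy : (S + T) ^ 2 / (c + d) ≤ S ^ 2 / c + T ^ 2 / d := by
    rw [div_add_div _ _ hc.ne' hd.ne', div_le_div_iff₀ (by positivity) (by positivity)]
    nlinarith [sq_nonneg (S * d - T * c), mul_pos hc hd]
  have key := mul_le_mul_of_nonneg_left hcauchy ht
  field_simp at key ⊢
  nlinarith [key]

theorem offDiagQuadForm_le_of_ultrametric (hw0 : ∀ i j, 0 ≤ w i j)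
    (hw : ∀ i j, w i j = w j i)
    (hultra : ∀ i j k, i ≠ j → i ≠ k → j ≠ k → w i k ≤ max (w i j) (w j k))
    (B : Finset E) {s : ℝ} (hs : ∀ i ∈ B, ∀ j ∈ B, i ≠ j → w i j ≤ s) :
    offDiagQuadForm w x B ≤ s * (1 - 1 / #B) * (∑ i ∈ B, x i) ^ 2 := by
  induction B using strongInduction generalizing s with
  | H B ih =>
  rcases le_or_gt #B 1 with hB | hB
  · rw [offDiagQuadForm_eq_zero_of_card_le_one x hB]
    rcases Nat.le_one_iff_eq_zero_or_eq_one.mp hB with h | h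
    · simp [card_eq_zero.mp h]
    · simp [h]
  obtain ⟨C, hCB, hC, hD, t, hle, hcross⟩ := exists_cross_eq_of_ultrametric hultra hB
  obtain ⟨i, hi⟩ := hC
  obtain ⟨j, hj⟩ := hD
  have hij : i ≠ j := fun h => (mem_sdiff.mp hj).2 (h ▸ hi)
  have ht : 0 ≤ t := hcross i hi j hj ▸ hw0 i j
  have hts : t ≤ s := hcross i hi j hj ▸ hs i (hCB hi) j (mem_sdiff.mp hj).1 hij
  have hcard : (#B : ℝ) = #C + #(B \ C) := by
    rw [card_sdiff_of_subset hCB, Nat.cast_sub (card_le_card hCB)]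
    ring
  have hB_coeff : (0 : ℝ) ≤ 1 - 1 / #B :=
    sub_nonneg.mpr (div_le_one_of_le₀ (by exact_mod_cast hB.le) (by positivity))
  have hsub {D : Finset E} (hD : D ⊆ B) : ∀ i ∈ D, ∀ j ∈ D, i ≠ j → w i j ≤ t :=
    fun i hi j hj => hle i (hD hi) j (hD hj)
  calc offDiagQuadForm w x B
      = offDiagQuadForm w x C + offDiagQuadForm w x (B \ C) +
          2 * t * (∑ i ∈ C, x i) * ∑ j ∈ B \ C, x j :=
        offDiagQuadForm_eq_of_cross_eq x hw hCB hcross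
    _ ≤ t * (1 - 1 / #C) * (∑ i ∈ C, x i) ^ 2 +
          t * (1 - 1 / #(B \ C)) * (∑ j ∈ B \ C, x j) ^ 2 +
          2 * t * (∑ i ∈ C, x i) * ∑ j ∈ B \ C, x j := by
        gcongr
        · exact ih C ⟨hCB, fun h => (mem_sdiff.mp hj).2 (h (mem_sdiff.mp hj).1)⟩ (hsub hCB)
        · exact ih (B \ C) ⟨sdiff_subset, fun h => (mem_sdiff.mp (h (hCB hi))).2 hi⟩
            (hsub sdiff_subset)
    _ ≤ t * (1 - 1 / #B) * ((∑ i ∈ C, x i) + ∑ j ∈ B \ C, x j) ^ 2 :=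
        hcard ▸ two_block_le ht (by exact_mod_cast card_pos.mpr ⟨i, hi⟩)
          (by exact_mod_cast card_pos.mpr ⟨j, hj⟩) _ _
    _ ≤ s * (1 - 1 / #B) * (∑ i ∈ B, x i) ^ 2 := by
        rw [← sum_sdiff hCB, add_comm (∑ i ∈ B \ C, x i)]
        gcongr
end OffDiagQuadForm

lemma posSemidef_neg_of_offDiagQuadForm_le {E : Type*} [Fintype E] [DecidableEq E] {c : ℝ}
    {w : E → E → ℝ} (hw : ∀ i j, w i j = w j i)
    (h : ∀ x, offDiagQuadForm w x univ ≤ c * (∑ i, x i) ^ 2) :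
    (-(Matrix.of fun i j : E => if i = j then -c else -c + w i j)).PosSemidef := by
  rw [Matrix.posSemidef_iff_dotProduct_mulVec]
  refine ⟨Matrix.IsHermitian.neg (Matrix.IsHermitian.ext fun i j => ?_), fun x => ?_⟩
  · simp [eq_comm, hw i j]
  · have hform : star x ⬝ᵥ ((-(Matrix.of fun i j : E => if i = j then -c else -c + w i j)) *ᵥ x)
        = c * (∑ i, x i) ^ 2 - offDiagQuadForm w x univ := by
      simp only [dotProduct, Matrix.mulVec, star_trivial, Matrix.neg_apply, Matrix.of_apply,
        offDiagQuadForm]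
      simp_rw [sq, sum_mul_sum, mul_sum, ← sum_sub_distrib]
      refine sum_congr rfl fun i _ => sum_congr rfl fun j _ => ?_
      split_ifs <;> ring
    linarith [h x, hform]

lemma MNatConcaveReal.rpow_submodularGap_le_max {E : Type*} [DecidableEq E] {ν : Finset E → ℝ}
    (hν : MNatConcaveReal ν) {q : ℝ} (hq0 : 0 < q) (hq1 : q ≤ 1) {i j k : E}
    (hij : i ≠ j) (hik : i ≠ k) :
    q ^ submodularGap ν i k ≤ max (q ^ submodularGap ν i j) (q ^ submodularGap ν j k) := by
  rcases min_le_iff.mp (hν.min_submodularGap_le hij hik) with h | h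
  · exact le_max_of_le_left (Real.rpow_le_rpow_of_exponent_ge hq0 hq1 h)
  · exact le_max_of_le_right (Real.rpow_le_rpow_of_exponent_ge hq0 hq1 h)

theorem mNatConcave_matrix_negSemidef_general {E : Type*} [Fintype E] [DecidableEq E]
    (ν : Finset E → ℝ) (hν : MNatConcaveReal ν)
    (q : ℝ) (hq0 : 0 < q) (hq1 : q ≤ 1) :
    (-(Matrix.of fun i j : E =>
      if i = j then -(1 - 1 / (Fintype.card E : ℝ))
      else -(1 - 1 / (Fintype.card E : ℝ)) +
        q ^ (-ν {i, j} + ν {i} + ν {j} - ν ∅))).PosSemidef := by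
  have hw (i j : E) : q ^ submodularGap ν i j = q ^ submodularGap ν j i := by
    rw [submodularGap_comm]
  refine posSemidef_neg_of_offDiagQuadForm_le (w := fun i j => q ^ submodularGap ν i j) hw
    fun x => ?_
  have key := offDiagQuadForm_le_of_ultrametric x (fun i j => (Real.rpow_pos_of_pos hq0 _).le) hw
    (fun i j k hij hik _ => hν.rpow_submodularGap_le_max hq0 hq1 hij hik) univ (s := 1)
    fun i _ j _ hij => Real.rpow_le_one hq0.le hq1 (hν.submodularGap_nonneg hij)
  rwa [one_mul, card_univ] at key

/-- **Theorem (key negative-semidefiniteness step).** Let `ν : Finset E → ℝ` be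
M♮-concave on a finite set `E` with `n = |E| ≥ 1` elements, and let `0 < q ≤ 1`.
Then the symmetric matrix `C` with entries
`C i j = −(1 − 1/n) + q^{−ν{i,j} + ν{i} + ν{j} − ν ∅}` for `i ≠ j` and
`C i i = −(1 − 1/n)` is negative semidefinite, i.e. `−C` is positive semidefinite. -/
theorem mNatConcave_matrix_negSemidef {E : Type*} [Fintype E] [DecidableEq E]
    (hE : 1 ≤ Fintype.card E)
    (ν : Finset E → ℝ) (hν : MNatConcaveReal ν)
    (q : ℝ) (hq0 : 0 < q) (hq1 : q ≤ 1) :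
    (-(Matrix.of fun i j : E =>
      if i = j then -(1 - 1 / (Fintype.card E : ℝ))
      else -(1 - 1 / (Fintype.card E : ℝ)) +
        q ^ (-ν {i, j} + ν {i} + ν {j} - ν ∅))).PosSemidef :=
  mNatConcave_matrix_negSemidef_general ν hν q hq0 hq1
end
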